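/- arXiv:1905.06797 — 7 statements merged into one kernel-verified Lean document; each statement's English description precedes it below -/
import Mathlib

section
/- If φ₁ and φ₂ are both models of a locally Lipschitz function f : ℝⁿ → ℝ, then φ = max{φ₁, φ₂} is again a model of f. -/
open Filter Topology Metric

noncomputable def clarkeD {n : ℕ} (f : EuclideanSpace ℝ (Fin n) → ℝ)
    (x d : EuclideanSpace ℝ (Fin n)) : ℝ :=
  Filter.limsup (fun p : EuclideanSpace ℝ (Fin n) × ℝ => (f (p.1 + p.2 • d) - f p.1) / p.2)
    ((𝓝 x) ×ˢ (𝓝[>] (0 : ℝ)))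

def clarkeSubdiff {n : ℕ} (f : EuclideanSpace ℝ (Fin n) → ℝ) (x : EuclideanSpace ℝ (Fin n)) :
    Set (EuclideanSpace ℝ (Fin n)) :=
  {g | ∀ d, (inner ℝ g d : ℝ) ≤ clarkeD f x d}

def convexSubdiff {n : ℕ} (φ : EuclideanSpace ℝ (Fin n) → ℝ) (x : EuclideanSpace ℝ (Fin n)) :
    Set (EuclideanSpace ℝ (Fin n)) :=
  {g | ∀ y, φ x + (inner ℝ g (y - x) : ℝ) ≤ φ y}

/-- `φ` is a model of `f` in the sense of axioms (M₁), (M₂), (M₃). -/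
def IsModel {n : ℕ} (f : EuclideanSpace ℝ (Fin n) → ℝ)
    (φ : EuclideanSpace ℝ (Fin n) → EuclideanSpace ℝ (Fin n) → ℝ) : Prop :=
  (∀ x, ConvexOn ℝ Set.univ (fun y => φ y x)) ∧
  (∀ x, φ x x = f x) ∧
  (∀ x, convexSubdiff (fun y => φ y x) x ⊆ clarkeSubdiff f x) ∧
  (∀ (x : EuclideanSpace ℝ (Fin n)) (y : ℕ → EuclideanSpace ℝ (Fin n)),
    Filter.Tendsto y Filter.atTop (𝓝 x) →
    ∃ ε : ℕ → ℝ, (∀ k, 0 ≤ ε k) ∧ Filter.Tendsto ε Filter.atTop (𝓝 0) ∧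
      ∀ k, f (y k) ≤ φ (y k) x + ε k * ‖y k - x‖) ∧
  (∀ (x y : EuclideanSpace ℝ (Fin n)) (xk yk : ℕ → EuclideanSpace ℝ (Fin n)),
    Filter.Tendsto xk Filter.atTop (𝓝 x) → Filter.Tendsto yk Filter.atTop (𝓝 y) →
    Filter.limsup (fun k => φ (yk k) (xk k)) Filter.atTop ≤ φ y x)

/-!
If `g` is a subgradient at `x` of `y ↦ max (φ₁ y x) (φ₂ y x)`, both pieces being active there,
then `⟪g, d⟫` is at most the one-sided directional derivative of the maximum, which is the maximum
of the directional derivatives `φᵢ'(x; d)`. By the max formula (Hahn–Banach applied to the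
sublinear map `d ↦ φᵢ'(x; d)`), each `φᵢ'(x; d)` is `⟪gᵢ, d⟫` for a subgradient `gᵢ` of
`φᵢ(·, x)` at `x`, and `(M₁)` for `φᵢ` bounds it by the Clarke derivative of `f`. Axioms `(M₂)`
and `(M₃)` pass to the maximum directly.
-/

open Set

section LineDeriv

variable {E : Type*} [AddCommGroup E] [Module ℝ E]

noncomputable def rightLineDeriv (ψ : E → ℝ) (x d : E) : ℝ :=
  derivWithin (fun t : ℝ => ψ (x + t • d)) (Ioi 0) 0

lemma tendsto_const_mul_nhdsGT_zero {c : ℝ} (hc : 0 < c) :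
    Tendsto (c * ·) (𝓝[>] (0 : ℝ)) (𝓝[>] 0) :=
  tendsto_nhdsWithin_of_tendsto_nhds_of_eventually_within _
    (((continuous_const_mul c).tendsto' 0 0 (mul_zero c)).mono_left nhdsWithin_le_nhds)
    (eventually_mem_nhdsWithin.mono fun _ ht => mul_pos hc ht)

theorem exists_linearMap_le_sublinear_eq (N : E → ℝ)
    (N_hom : ∀ c : ℝ, 0 < c → ∀ v, N (c • v) = c * N v) (N_add : ∀ v w, N (v + w) ≤ N v + N w)
    (d : E) : ∃ ℓ : E →ₗ[ℝ] ℝ, (∀ v, ℓ v ≤ N v) ∧ ℓ d = N d := by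
  have N_zero : N 0 = 0 := by
    have h := N_hom 2 two_pos 0
    rw [smul_zero] at h
    linarith
  let L : E →ₗ.[ℝ] ℝ := LinearPMap.mkSpanSingleton' d (N d) fun c hc => by
    rcases smul_eq_zero.1 hc with rfl | rfl <;> simp [N_zero]
  have hLN : ∀ v : L.domain, L v ≤ N v := by
    rintro ⟨v, hv⟩
    obtain ⟨c, rfl⟩ := Submodule.mem_span_singleton.1 hv
    show L ⟨c • d, hv⟩ ≤ N (c • d)
    rw [LinearPMap.mkSpanSingleton'_apply, RingHom.id_apply, smul_eq_mul]
    rcases lt_trichotomy c 0 with hc | rfl | hc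
    · have h_opp : 0 ≤ N d + N (-d) := by simpa [N_zero] using N_add d (-d)
      rw [show c • d = (-c) • -d by simp, N_hom (-c) (neg_pos.2 hc)]
      nlinarith
    · simp [N_zero]
    · rw [N_hom c hc]
  obtain ⟨ℓ, hℓL, hℓN⟩ := exists_extension_of_le_sublinear L N N_hom N_add hLN
  refine ⟨ℓ, hℓN, ?_⟩
  rw [hℓL ⟨d, Submodule.mem_span_singleton_self d⟩]
  exact LinearPMap.mkSpanSingleton'_apply_self _ _ _ _

namespace ConvexOn

variable {ψ ψ₁ ψ₂ : E → ℝ}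

lemma comp_line (hψ : ConvexOn ℝ univ ψ) (x d : E) :
    ConvexOn ℝ univ (fun t : ℝ => ψ (x + t • d)) := by
  simpa [Function.comp_def, AffineMap.lineMap_apply, add_comm] using
    hψ.comp_affineMap (AffineMap.lineMap x (x + d))

lemma tendsto_rightLineDeriv (hψ : ConvexOn ℝ univ ψ) (x d : E) :
    Tendsto (fun t : ℝ => (ψ (x + t • d) - ψ x) / t) (𝓝[>] 0) (𝓝 (rightLineDeriv ψ x d)) := by
  have h := (hψ.comp_line x d).hasDerivWithinAt_rightDeriv_of_mem_interior
    (x := 0) (by simp)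
  rw [hasDerivWithinAt_iff_tendsto_slope, sdiff_singleton_eq_self self_notMem_Ioi] at h
  simpa [rightLineDeriv, slope_fun_def_field] using h

lemma rightLineDeriv_le_sub (hψ : ConvexOn ℝ univ ψ) (x v : E) :
    rightLineDeriv ψ x v ≤ ψ (x + v) - ψ x := by
  simpa [rightLineDeriv, slope_def_field] using
    (hψ.comp_line x v).rightDeriv_le_slope_of_mem_interior (x := 0) (by simp) (mem_univ 1) one_pos

lemma rightLineDeriv_smul (hψ : ConvexOn ℝ univ ψ) (x d : E) {c : ℝ} (hc : 0 < c) :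
    rightLineDeriv ψ x (c • d) = c * rightLineDeriv ψ x d := by
  refine tendsto_nhds_unique (hψ.tendsto_rightLineDeriv x (c • d))
    ((((hψ.tendsto_rightLineDeriv x d).comp (tendsto_const_mul_nhdsGT_zero hc)).const_mul
      c).congr' ?_)
  filter_upwards [self_mem_nhdsWithin] with t (ht : 0 < t)
  simp only [Function.comp_apply, smul_smul, mul_comm t c]
  field_simp

lemma rightLineDeriv_add_le (hψ : ConvexOn ℝ univ ψ) (x d e : E) :
    rightLineDeriv ψ x (d + e) ≤ rightLineDeriv ψ x d + rightLineDeriv ψ x e := by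
  have h2 := tendsto_const_mul_nhdsGT_zero (two_pos (α := ℝ))
  refine le_of_tendsto_of_tendsto (hψ.tendsto_rightLineDeriv x (d + e))
    (((hψ.tendsto_rightLineDeriv x d).comp h2).add ((hψ.tendsto_rightLineDeriv x e).comp h2)) ?_
  filter_upwards [self_mem_nhdsWithin] with t (ht : 0 < t)
  have hmid := hψ.2 (mem_univ (x + (2 * t) • d)) (mem_univ (x + (2 * t) • e))
    (by norm_num : (0 : ℝ) ≤ 1 / 2) (by norm_num : (0 : ℝ) ≤ 1 / 2) (by norm_num)
  have hpt : (1 / 2 : ℝ) • (x + (2 * t) • d) + (1 / 2 : ℝ) • (x + (2 * t) • e) =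
      x + t • (d + e) := by
    match_scalars <;> ring
  rw [hpt, smul_eq_mul, smul_eq_mul] at hmid
  simp only [Function.comp_apply]
  rw [← add_div, div_le_div_iff₀ ht (by positivity)]
  nlinarith

lemma exists_linearMap_le_eq_rightLineDeriv (hψ : ConvexOn ℝ univ ψ) (x d : E) :
    ∃ ℓ : E →ₗ[ℝ] ℝ, (∀ v, ℓ v ≤ ψ (x + v) - ψ x) ∧ ℓ d = rightLineDeriv ψ x d := by
  obtain ⟨ℓ, hle, heq⟩ := exists_linearMap_le_sublinear_eq (rightLineDeriv ψ x)
    (fun _ hc v => hψ.rightLineDeriv_smul x v hc) (hψ.rightLineDeriv_add_le x) d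
  exact ⟨ℓ, fun v => (hle v).trans (hψ.rightLineDeriv_le_sub x v), heq⟩

lemma rightLineDeriv_max_of_eq (hψ₁ : ConvexOn ℝ univ ψ₁) (hψ₂ : ConvexOn ℝ univ ψ₂) {x : E}
    (hx : ψ₁ x = ψ₂ x) (d : E) :
    rightLineDeriv (fun y => max (ψ₁ y) (ψ₂ y)) x d =
      max (rightLineDeriv ψ₁ x d) (rightLineDeriv ψ₂ x d) := by
  refine tendsto_nhds_unique ((hψ₁.sup hψ₂).tendsto_rightLineDeriv x d)
    (((hψ₁.tendsto_rightLineDeriv x d).max (hψ₂.tendsto_rightLineDeriv x d)).congr' ?_)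
  filter_upwards [self_mem_nhdsWithin] with t (ht : 0 < t)
  simp only [Pi.sup_apply]
  rw [← hx, max_self, max_div_div_right ht.le, max_sub_sub_right]

end ConvexOn

end LineDeriv

lemma Real.sInf_inter_le_max_of_isUpperSet {S T : Set ℝ} (hS : IsUpperSet S) (hT : IsUpperSet T) :
    sInf (S ∩ T) ≤ max (sInf S) (sInf T) := by
  rcases S.eq_empty_or_nonempty with rfl | hS₀
  · simp
  rcases T.eq_empty_or_nonempty with rfl | hT₀
  · simp
  by_cases hbdd : BddBelow (S ∩ T)
  · refine le_of_forall_gt_imp_ge_of_dense fun c hc => csInf_le hbdd ⟨?_, ?_⟩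
    · obtain ⟨a, ha, hac⟩ := exists_lt_of_csInf_lt hS₀ ((le_max_left _ _).trans_lt hc)
      exact hS hac.le ha
    · obtain ⟨b, hb, hbc⟩ := exists_lt_of_csInf_lt hT₀ ((le_max_right _ _).trans_lt hc)
      exact hT hbc.le hb
  · rw [Real.sInf_of_not_bddBelow hbdd,
      Real.sInf_of_not_bddBelow fun h => hbdd (h.mono inter_subset_left)]
    exact le_max_left _ _

-- Unlike `limsup_max`, no boundedness is assumed: an unbounded `u` has the junk `limsup` `0`.
lemma Real.limsup_max_le {α : Type*} {l : Filter α} (u v : α → ℝ) :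
    limsup (fun a => max (u a) (v a)) l ≤ max (limsup u l) (limsup v l) := by
  simp only [limsup_eq, max_le_iff, eventually_and]
  exact Real.sInf_inter_le_max_of_isUpperSet
    (fun _ _ hab h => Eventually.mono h fun _ hx => hx.trans hab)
    (fun _ _ hab h => Eventually.mono h fun _ hx => hx.trans hab)

section Euclidean

variable {n : ℕ} {ψ : EuclideanSpace ℝ (Fin n) → ℝ}

lemma ConvexOn.exists_mem_convexSubdiff_inner_eq (hψ : ConvexOn ℝ univ ψ)
    (x d : EuclideanSpace ℝ (Fin n)) :
    ∃ g ∈ convexSubdiff ψ x, inner ℝ g d = rightLineDeriv ψ x d := by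
  obtain ⟨ℓ, hle, heq⟩ := hψ.exists_linearMap_le_eq_rightLineDeriv x d
  let g := (InnerProductSpace.toDual ℝ (EuclideanSpace ℝ (Fin n))).symm ℓ.toContinuousLinearMap
  have hg : ∀ v, inner ℝ g v = ℓ v := fun v => by simp [g]
  refine ⟨g, fun y => ?_, by rw [hg, heq]⟩
  have hy := hle (y - x)
  rw [add_sub_cancel] at hy
  rw [hg]
  linarith

lemma inner_le_rightLineDeriv_of_mem_convexSubdiff (hψ : ConvexOn ℝ univ ψ)
    {x g : EuclideanSpace ℝ (Fin n)} (hg : g ∈ convexSubdiff ψ x) (d : EuclideanSpace ℝ (Fin n)) :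
    inner ℝ g d ≤ rightLineDeriv ψ x d := by
  refine ge_of_tendsto (hψ.tendsto_rightLineDeriv x d) ?_
  filter_upwards [self_mem_nhdsWithin] with t (ht : 0 < t)
  have hxt := hg (x + t • d)
  rw [add_sub_cancel_left, real_inner_smul_right] at hxt
  rw [le_div_iff₀ ht]
  linarith

end Euclidean

namespace IsModel

variable {n : ℕ} {f : EuclideanSpace ℝ (Fin n) → ℝ}
  {φ φ₁ φ₂ : EuclideanSpace ℝ (Fin n) → EuclideanSpace ℝ (Fin n) → ℝ}

lemma rightLineDeriv_le_clarkeD (h : IsModel f φ) (x d : EuclideanSpace ℝ (Fin n)) :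
    rightLineDeriv (fun y => φ y x) x d ≤ clarkeD f x d := by
  obtain ⟨g, hg, hgd⟩ := (h.1 x).exists_mem_convexSubdiff_inner_eq x d
  exact hgd ▸ h.2.2.1 x hg d

lemma convexSubdiff_max_subset (h₁ : IsModel f φ₁) (h₂ : IsModel f φ₂)
    (x : EuclideanSpace ℝ (Fin n)) :
    convexSubdiff (fun y => max (φ₁ y x) (φ₂ y x)) x ⊆ clarkeSubdiff f x := by
  intro g hg d
  have hx : φ₁ x x = φ₂ x x := (h₁.2.1 x).trans (h₂.2.1 x).symm
  calc inner ℝ g d ≤ rightLineDeriv (fun y => max (φ₁ y x) (φ₂ y x)) x d :=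
        inner_le_rightLineDeriv_of_mem_convexSubdiff ((h₁.1 x).sup (h₂.1 x)) hg d
    _ = max (rightLineDeriv (fun y => φ₁ y x) x d) (rightLineDeriv (fun y => φ₂ y x) x d) :=
        (h₁.1 x).rightLineDeriv_max_of_eq (h₂.1 x) hx d
    _ ≤ clarkeD f x d :=
        max_le (h₁.rightLineDeriv_le_clarkeD x d) (h₂.rightLineDeriv_le_clarkeD x d)

end IsModel

theorem stmt2_general {n : ℕ} (f : EuclideanSpace ℝ (Fin n) → ℝ)
    (φ₁ φ₂ : EuclideanSpace ℝ (Fin n) → EuclideanSpace ℝ (Fin n) → ℝ)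
    (h₁ : IsModel f φ₁) (h₂ : IsModel f φ₂) :
    IsModel f (fun y x => max (φ₁ y x) (φ₂ y x)) := by
  refine ⟨fun x => (h₁.1 x).sup (h₂.1 x), fun x => by simp [h₁.2.1 x, h₂.2.1 x],
    h₁.convexSubdiff_max_subset h₂, fun x y hy => ?_, fun x y xk yk hxk hyk => ?_⟩
  · obtain ⟨ε₁, hε₁_nonneg, hε₁, hf₁⟩ := h₁.2.2.2.1 x y hy
    obtain ⟨ε₂, -, hε₂, -⟩ := h₂.2.2.2.1 x y hy
    refine ⟨fun k => max (ε₁ k) (ε₂ k), fun k => (hε₁_nonneg k).trans (le_max_left _ _),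
      by simpa using hε₁.max hε₂, fun k => (hf₁ k).trans ?_⟩
    gcongr
    exacts [le_max_left _ _, le_max_left _ _]
  · exact (Real.limsup_max_le _ _).trans
      (max_le_max (h₁.2.2.2.2 x y xk yk hxk hyk) (h₂.2.2.2.2 x y xk yk hxk hyk))

theorem stmt2 {n : ℕ} (f : EuclideanSpace ℝ (Fin n) → ℝ) (hf : LocallyLipschitz f)
    (φ₁ φ₂ : EuclideanSpace ℝ (Fin n) → EuclideanSpace ℝ (Fin n) → ℝ)
    (h₁ : IsModel f φ₁) (h₂ : IsModel f φ₂) :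
    IsModel f (fun y x => max (φ₁ y x) (φ₂ y x)) :=
  stmt2_general f φ₁ φ₂ h₁ h₂
end

section
/- Let f = ψ ∘ F with ψ : ℝᵐ → ℝ convex and F : ℝⁿ → ℝᵐ continuously differentiable. Then the natural model φ(y,x) = ψ(F(x) + F'(x)(y - x)) is a strict model of f: for all sequences xₖ → x and yₖ → x there exist εₖ → 0⁺ with f(yₖ) ≤ φ(yₖ,xₖ) + εₖ‖yₖ - xₖ‖; moreover φ(·,x) is convex, φ(x,x) = f(x), and ∂₁φ(x,x) ⊆ ∂f(x). -/
/-!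
A C¹ map is strictly differentiable, so `F y = F x' + F'(x') (y - x') + o(‖y - x'‖)` as
`x', y → x`; a convex `ψ` is locally Lipschitz, so this error survives composition with `ψ`,
which is the strictness of the model. Specialising to `x' = x` and `y = x + s • d`, a
subgradient `g` of the model at `x` gives `⟪g, d⟫ ≤ (f (x + s • d) - f x) / s + o(1)` as
`s ↓ 0`, and the difference quotients of the locally Lipschitz `f` are bounded above, so this
lower bound passes to the Clarke directional derivative.
-/

open Filter Topology Metric

open Asymptotics

section Asymptotics

variable {α 𝕜 E G : Type*} {l : Filter α}

lemma isLittleO_apply_of_tendsto_zero [NontriviallyNormedField 𝕜] [NormedAddCommGroup E]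
    [NormedSpace 𝕜 E] [NormedAddCommGroup G] [NormedSpace 𝕜 G] {A : α → E →L[𝕜] G} {w : α → E}
    (hA : Tendsto A l (𝓝 0)) : (fun k => A k (w k)) =o[l] w := by
  refine isLittleO_iff.2 fun c hc => ?_
  filter_upwards [(tendsto_zero_iff_norm_tendsto_zero.1 hA).eventually_le_const hc]
    with k hk
  exact (A k).le_of_opNorm_le hk (w k)

lemma exists_nonneg_tendsto_zero_le_mul_of_isLittleO {u v : α → ℝ} (h : u =o[l] v)
    (hv : ∀ k, 0 ≤ v k) (hzero : ∀ k, v k = 0 → u k ≤ 0) :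
    ∃ ε : α → ℝ, (∀ k, 0 ≤ ε k) ∧ Tendsto ε l (𝓝 0) ∧ ∀ k, u k ≤ ε k * v k := by
  refine ⟨fun k => max 0 (u k / v k), fun k => le_max_left _ _, ?_, fun k => ?_⟩
  · simpa using (tendsto_const_nhds (x := (0 : ℝ))).max h.tendsto_div_nhds_zero
  · rcases (hv k).eq_or_lt with hk | hk
    · simpa [← hk] using hzero k hk.symm
    · calc u k = u k / v k * v k := (div_mul_cancel₀ _ hk.ne').symm
        _ ≤ max 0 (u k / v k) * v k := by gcongr; exact le_max_right _ _

end Asymptotics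

section Differentiability

variable {α 𝕜 E G H : Type*} [RCLike 𝕜] {l : Filter α}
  [NormedAddCommGroup E] [NormedSpace 𝕜 E] [NormedAddCommGroup G] [NormedSpace 𝕜 G]

lemma ContDiffAt.isLittleO_sub_fderiv_apply {f : E → G} {x : E} (hf : ContDiffAt 𝕜 1 f x)
    {u v : α → E} (hu : Tendsto u l (𝓝 x)) (hv : Tendsto v l (𝓝 x)) :
    (fun k => f (v k) - f (u k) - fderiv 𝕜 f (u k) (v k - u k)) =o[l] fun k => v k - u k := by
  have hstrict := (hf.hasStrictFDerivAt one_ne_zero).isLittleO.comp_tendsto (hv.prodMk_nhds hu)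
  have hderiv : Tendsto (fun k => fderiv 𝕜 f x - fderiv 𝕜 f (u k)) l (𝓝 0) := by
    rw [← sub_self (fderiv 𝕜 f x)]
    exact tendsto_const_nhds.sub
      ((hf.fderiv_right (m := 0) (by norm_num)).continuousAt.tendsto.comp hu)
  refine (hstrict.add (isLittleO_apply_of_tendsto_zero hderiv)).congr_left fun k => ?_
  simp only [Function.comp_apply, sub_apply]
  abel

lemma LocallyLipschitz.isBigO_comp_sub [NormedAddCommGroup H] {g : G → H}
    (hg : LocallyLipschitz g) {a : G} {u v : α → G} (hu : Tendsto u l (𝓝 a))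
    (hv : Tendsto v l (𝓝 a)) : (fun k => g (u k) - g (v k)) =O[l] fun k => u k - v k := by
  obtain ⟨K, t, ht, hK⟩ := hg a
  refine IsBigO.of_bound K ?_
  filter_upwards [hu ht, hv ht] with k hut hvt
  simpa only [dist_eq_norm] using hK.dist_le_mul _ hut _ hvt

lemma LocallyLipschitz.isLittleO_comp_sub_comp_linearization [NormedAddCommGroup H]
    {ψ : G → H} (hψ : LocallyLipschitz ψ) {F : E → G} {x : E} (hF : ContDiffAt 𝕜 1 F x)
    {u v : α → E} (hu : Tendsto u l (𝓝 x)) (hv : Tendsto v l (𝓝 x)) :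
    (fun k => ψ (F (v k)) - ψ (F (u k) + fderiv 𝕜 F (u k) (v k - u k))) =o[l]
      fun k => v k - u k := by
  have hrem := hF.isLittleO_sub_fderiv_apply hu hv
  have hFv : Tendsto (fun k => F (v k)) l (𝓝 (F x)) := hF.continuousAt.tendsto.comp hv
  have hlin : Tendsto (fun k => F (u k) + fderiv 𝕜 F (u k) (v k - u k)) l (𝓝 (F x)) := by
    have := hFv.sub (hrem.trans_tendsto (by simpa using hv.sub hu))
    rw [sub_zero] at this
    exact this.congr fun k => by abel
  refine (hψ.isBigO_comp_sub hFv hlin).trans_isLittleO (hrem.congr_left fun k => ?_)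
  abel

end Differentiability

lemma ConvexOn.comp_linearization {E G : Type*} [NormedAddCommGroup E] [NormedSpace ℝ E]
    [NormedAddCommGroup G] [NormedSpace ℝ G] {ψ : G → ℝ} (hψ : ConvexOn ℝ Set.univ ψ)
    (A : E →L[ℝ] G) (b : G) (x : E) : ConvexOn ℝ Set.univ fun y => ψ (b + A (y - x)) := by
  set g := A.toLinearMap.toAffineMap + AffineMap.const ℝ E (b - A x)
  have hg : ∀ y, g y = b + A (y - x) := fun y => by
    simp only [g, AffineMap.coe_add, Pi.add_apply, AffineMap.const_apply,
      LinearMap.coe_toAffineMap, ContinuousLinearMap.coe_coe, map_sub]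
    abel
  simpa only [Set.preimage_univ, Function.comp_def, hg] using hψ.comp_affineMap g

section Clarke

lemma LocallyLipschitz.isBoundedUnder_le_diffQuotient {E : Type*} [NormedAddCommGroup E]
    [NormedSpace ℝ E] {f : E → ℝ} (hf : LocallyLipschitz f) (x d : E) :
    ((𝓝 x) ×ˢ (𝓝[>] (0 : ℝ))).IsBoundedUnder (· ≤ ·)
      fun p : E × ℝ => (f (p.1 + p.2 • d) - f p.1) / p.2 := by
  obtain ⟨K, t, ht, hK⟩ := hf x
  have hshift : Tendsto (fun p : E × ℝ => p.1 + p.2 • d) ((𝓝 x) ×ˢ (𝓝[>] (0 : ℝ))) (𝓝 x) := by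
    have hP : (𝓝 x) ×ˢ (𝓝[>] (0 : ℝ)) ≤ 𝓝 (x, 0) := by
      rw [nhds_prod_eq]; exact prod_mono le_rfl nhdsWithin_le_nhds
    have hcont : Continuous fun p : E × ℝ => p.1 + p.2 • d := by fun_prop
    simpa using (hcont.tendsto (x, 0)).mono_left hP
  refine isBoundedUnder_of_eventually_le (a := K * ‖d‖) ?_
  filter_upwards [hshift ht, tendsto_fst ht, tendsto_snd self_mem_nhdsWithin]
    with p hshift_mem hmem (hpos : 0 < p.2)
  rw [div_le_iff₀ hpos]
  calc f (p.1 + p.2 • d) - f p.1 ≤ dist (f (p.1 + p.2 • d)) (f p.1) :=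
        (Real.dist_eq _ _).symm ▸ le_abs_self _
    _ ≤ K * dist (p.1 + p.2 • d) p.1 := hK.dist_le_mul _ hshift_mem _ hmem
    _ = K * ‖d‖ * p.2 := by
      rw [dist_eq_norm, add_sub_cancel_left, norm_smul, Real.norm_of_nonneg hpos.le]; ring

variable {n : ℕ} {f : EuclideanSpace ℝ (Fin n) → ℝ} {x : EuclideanSpace ℝ (Fin n)}

lemma le_clarkeD_of_eventually_le (hf : LocallyLipschitz f) {d : EuclideanSpace ℝ (Fin n)}
    {a : ℝ} {r : ℝ → ℝ} (hr : Tendsto r (𝓝[>] 0) (𝓝 0))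
    (h : ∀ᶠ s in 𝓝[>] 0, a + r s ≤ (f (x + s • d) - f x) / s) : a ≤ clarkeD f x d := by
  refine le_of_forall_lt_imp_le_of_dense fun c hc => ?_
  have hslice : ∀ᶠ s in 𝓝[>] (0 : ℝ), c ≤ (f (x + s • d) - f x) / s := by
    filter_upwards [h, hr.eventually (lt_mem_nhds (sub_neg.2 hc))] with s hs hrs
    linarith
  have hembed : Tendsto (fun s : ℝ => (x, s)) (𝓝[>] 0) ((𝓝 x) ×ˢ (𝓝[>] (0 : ℝ))) :=
    tendsto_const_nhds.prodMk tendsto_id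
  exact le_limsup_of_frequently_le (hembed.frequently hslice.frequently)
    (hf.isBoundedUnder_le_diffQuotient x d)

theorem convexSubdiff_subset_clarkeSubdiff {φ : EuclideanSpace ℝ (Fin n) → ℝ}
    (hf : LocallyLipschitz f) (hx : φ x = f x)
    (hφ : ∀ d, Tendsto (fun s : ℝ => (f (x + s • d) - φ (x + s • d)) / s) (𝓝[>] 0) (𝓝 0)) :
    convexSubdiff φ x ⊆ clarkeSubdiff f x := by
  intro g hg d
  refine le_clarkeD_of_eventually_le hf (hφ d) ?_
  filter_upwards [self_mem_nhdsWithin] with s (hs : 0 < s)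
  have hsub := hg (x + s • d)
  rw [add_sub_cancel_left, real_inner_smul_right, hx] at hsub
  rw [← sub_nonneg]
  have hdiff : (f (x + s • d) - f x) / s - (inner ℝ g d + (f (x + s • d) - φ (x + s • d)) / s)
      = (φ (x + s • d) - (f x + s * inner ℝ g d)) / s := by
    field_simp; ring
  rw [hdiff]
  exact div_nonneg (sub_nonneg.2 hsub) hs.le

end Clarke

theorem stmt3 {n m : ℕ} (ψ : EuclideanSpace ℝ (Fin m) → ℝ)
    (F : EuclideanSpace ℝ (Fin n) → EuclideanSpace ℝ (Fin m))
    (hψ : ConvexOn ℝ Set.univ ψ) (hF : ContDiff ℝ 1 F)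
    (φ : EuclideanSpace ℝ (Fin n) → EuclideanSpace ℝ (Fin n) → ℝ)
    (hφ : ∀ y x, φ y x = ψ (F x + fderiv ℝ F x (y - x))) :
    (∀ (x : EuclideanSpace ℝ (Fin n)) (xk yk : ℕ → EuclideanSpace ℝ (Fin n)),
      Filter.Tendsto xk Filter.atTop (𝓝 x) → Filter.Tendsto yk Filter.atTop (𝓝 x) →
      ∃ ε : ℕ → ℝ, (∀ k, 0 ≤ ε k) ∧ Filter.Tendsto ε Filter.atTop (𝓝 0) ∧
        ∀ k, ψ (F (yk k)) ≤ φ (yk k) (xk k) + ε k * ‖yk k - xk k‖) ∧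
    (∀ x, ConvexOn ℝ Set.univ (fun y => φ y x)) ∧
    (∀ x, φ x x = ψ (F x)) ∧
    (∀ x, convexSubdiff (fun y => φ y x) x ⊆ clarkeSubdiff (fun u => ψ (F u)) x) := by
  obtain rfl : φ = fun y x => ψ (F x + fderiv ℝ F x (y - x)) := funext₂ hφ
  have hψ_lip := hψ.locallyLipschitz
  refine ⟨fun x xk yk hxk hyk => ?_, fun x => hψ.comp_linearization _ _ x, fun x => by simp,
    fun x => ?_⟩
  · obtain ⟨ε, hε0, hε, hle⟩ := exists_nonneg_tendsto_zero_le_mul_of_isLittleO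
      (hψ_lip.isLittleO_comp_sub_comp_linearization hF.contDiffAt hxk hyk).norm_right
      (fun k => norm_nonneg _) fun k hk => by simp [sub_eq_zero.1 (norm_eq_zero.1 hk)]
    exact ⟨ε, hε0, hε, fun k => sub_le_iff_le_add'.1 (hle k)⟩
  · refine convexSubdiff_subset_clarkeSubdiff (hψ_lip.comp hF.locallyLipschitz) (by simp)
      fun d => ?_
    have hray : Tendsto (fun s : ℝ => x + s • d) (𝓝[>] 0) (𝓝 x) :=
      (Continuous.tendsto' (by fun_prop) 0 x (by simp)).mono_left nhdsWithin_le_nhds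
    have hdir : (fun s : ℝ => x + s • d - x) =O[𝓝[>] 0] fun s => s :=
      IsBigO.of_bound ‖d‖ (Eventually.of_forall fun s => by simp [norm_smul, mul_comm])
    exact ((hψ_lip.isLittleO_comp_sub_comp_linearization hF.contDiffAt tendsto_const_nhds
      hray).trans_isBigO hdir).tendsto_div_nhds_zero
end

section
/- Let f : ℝⁿ → ℝ be locally Lipschitz and lower C¹ at x̄, meaning: for xⱼ, yⱼ → x̄ and every gⱼ ∈ ∂f(yⱼ) there exist εⱼ → 0⁺ such that f(yⱼ) ≤ f(xⱼ) + gⱼᵀ(yⱼ - xⱼ) + εⱼ‖yⱼ - xⱼ‖. Fix c > 0 and define the downshifted tangent at trial point z with subgradient g ∈ ∂f(z) and serious point x by m(y) = f(z) + gᵀ(y - z) - s(z,x,g) with downshift s(z,x,g) = max{f(z) + gᵀ(x - z) - f(x) + c‖z - x‖², 0}. Then for all sequences zⱼ, xⱼ → x̄ and every choice gⱼ ∈ ∂f(zⱼ) there exist ε̃ⱼ → 0⁺ such that f(zⱼ) ≤ mⱼ(zⱼ) + ε̃ⱼ‖zⱼ - xⱼ‖, where mⱼ is the downshifted tangent with data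 (zⱼ, xⱼ, gⱼ). -/
open Filter Topology Metric

/-- The downshift `s(z,x,g)`. -/
noncomputable def downshift {n : ℕ} (f : EuclideanSpace ℝ (Fin n) → ℝ) (c : ℝ)
    (z x g : EuclideanSpace ℝ (Fin n)) : ℝ :=
  max (f z + (inner ℝ g (x - z) : ℝ) - f x + c * ‖z - x‖^2) 0

/-- The downshifted tangent `m(y) = f(z) + gᵀ(y-z) - s(z,x,g)`. -/
noncomputable def downshiftedTangent {n : ℕ} (f : EuclideanSpace ℝ (Fin n) → ℝ) (c : ℝ)
    (z x g y : EuclideanSpace ℝ (Fin n)) : ℝ :=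
  f z + (inner ℝ g (y - z) : ℝ) - downshift f c z x g

/-
Evaluating the downshifted tangent at its own trial point leaves `f z - s(z,x,g)`. The lower-C¹
inequality at the pair `(x, z)` bounds the linearization error `f z + gᵀ(x - z) - f x` by
`ε ‖z - x‖`, so the downshift is at most `(ε + c ‖z - x‖) ‖z - x‖`, and `ε + c ‖z - x‖ → 0`.
-/

section DownshiftedTangent

variable {n : ℕ} {f : EuclideanSpace ℝ (Fin n) → ℝ} {c ε : ℝ} {z x g : EuclideanSpace ℝ (Fin n)}

lemma downshiftedTangent_self (f : EuclideanSpace ℝ (Fin n) → ℝ) (c : ℝ)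
    (z x g : EuclideanSpace ℝ (Fin n)) :
    downshiftedTangent f c z x g z = f z - downshift f c z x g := by
  simp [downshiftedTangent]

lemma downshift_le (hc : 0 ≤ c) (hε : 0 ≤ ε)
    (h : f z ≤ f x + inner ℝ g (z - x) + ε * ‖z - x‖) :
    downshift f c z x g ≤ (ε + c * ‖z - x‖) * ‖z - x‖ := by
  have hswap : (inner ℝ g (x - z) : ℝ) = -inner ℝ g (z - x) := by
    rw [← inner_neg_right, neg_sub]
  refine max_le ?_ (by positivity)
  rw [hswap]
  nlinarith

lemma le_downshiftedTangent_self_add (hc : 0 ≤ c) (hε : 0 ≤ ε)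
    (h : f z ≤ f x + inner ℝ g (z - x) + ε * ‖z - x‖) :
    f z ≤ downshiftedTangent f c z x g z + (ε + c * ‖z - x‖) * ‖z - x‖ := by
  rw [downshiftedTangent_self]
  linarith [downshift_le hc hε h]

end DownshiftedTangent

theorem stmt6_general {n : ℕ} (f : EuclideanSpace ℝ (Fin n) → ℝ)
    (xbar : EuclideanSpace ℝ (Fin n)) (c : ℝ) (hc : 0 < c)
    (hlc1 : ∀ (x y : ℕ → EuclideanSpace ℝ (Fin n)) (g : ℕ → EuclideanSpace ℝ (Fin n)),
      Filter.Tendsto x Filter.atTop (𝓝 xbar) → Filter.Tendsto y Filter.atTop (𝓝 xbar) →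
      (∀ j, g j ∈ clarkeSubdiff f (y j)) →
      ∃ ε : ℕ → ℝ, (∀ j, 0 ≤ ε j) ∧ Filter.Tendsto ε Filter.atTop (𝓝 0) ∧
        ∀ j, f (y j) ≤ f (x j) + (inner ℝ (g j) (y j - x j) : ℝ) + ε j * ‖y j - x j‖) :
    ∀ (z x : ℕ → EuclideanSpace ℝ (Fin n)) (g : ℕ → EuclideanSpace ℝ (Fin n)),
      Filter.Tendsto z Filter.atTop (𝓝 xbar) → Filter.Tendsto x Filter.atTop (𝓝 xbar) →
      (∀ j, g j ∈ clarkeSubdiff f (z j)) →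
      ∃ ε : ℕ → ℝ, (∀ j, 0 ≤ ε j) ∧ Filter.Tendsto ε Filter.atTop (𝓝 0) ∧
        ∀ j, f (z j) ≤ downshiftedTangent f c (z j) (x j) (g j) (z j) + ε j * ‖z j - x j‖ := by
  intro z x g hz hx hg
  obtain ⟨ε, hε0, hεlim, hε⟩ := hlc1 x z g hx hz hg
  have hdist : Tendsto (fun j => ‖z j - x j‖) atTop (𝓝 0) := by
    simpa using (hz.sub hx).norm
  refine ⟨fun j => ε j + c * ‖z j - x j‖, fun j => ?_, ?_, fun j => ?_⟩
  · have := hε0 j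
    positivity
  · simpa using hεlim.add (hdist.const_mul c)
  · exact le_downshiftedTangent_self_add hc.le (hε0 j) (hε j)

theorem stmt6 {n : ℕ} (f : EuclideanSpace ℝ (Fin n) → ℝ) (hf : LocallyLipschitz f)
    (xbar : EuclideanSpace ℝ (Fin n)) (c : ℝ) (hc : 0 < c)
    (hlc1 : ∀ (x y : ℕ → EuclideanSpace ℝ (Fin n)) (g : ℕ → EuclideanSpace ℝ (Fin n)),
      Filter.Tendsto x Filter.atTop (𝓝 xbar) → Filter.Tendsto y Filter.atTop (𝓝 xbar) →
      (∀ j, g j ∈ clarkeSubdiff f (y j)) →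
      ∃ ε : ℕ → ℝ, (∀ j, 0 ≤ ε j) ∧ Filter.Tendsto ε Filter.atTop (𝓝 0) ∧
        ∀ j, f (y j) ≤ f (x j) + (inner ℝ (g j) (y j - x j) : ℝ) + ε j * ‖y j - x j‖) :
    ∀ (z x : ℕ → EuclideanSpace ℝ (Fin n)) (g : ℕ → EuclideanSpace ℝ (Fin n)),
      Filter.Tendsto z Filter.atTop (𝓝 xbar) → Filter.Tendsto x Filter.atTop (𝓝 xbar) →
      (∀ j, g j ∈ clarkeSubdiff f (z j)) →
      ∃ ε : ℕ → ℝ, (∀ j, 0 ≤ ε j) ∧ Filter.Tendsto ε Filter.atTop (𝓝 0) ∧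
        ∀ j, f (z j) ≤ downshiftedTangent f c (z j) (x j) (g j) (z j) + ε j * ‖z j - x j‖ :=
  stmt6_general f xbar c hc hlc1
end

section
/- Let C ⊆ ℝⁿ be closed convex, x ∈ C, φ : ℝⁿ → ℝ convex with φ(x) = f(x), Q ⪰ 0 symmetric, R > 0, and let y* minimize Φ(y) = φ(y) + ½(y-x)ᵀQ(y-x) over C ∩ B(x,R) where B(x,R) is the ball of radius R for a norm ‖·‖. Let g* ∈ ∂(φ + i_C)(y*) and v in the normal cone of B(x,R) at y* satisfy g* + Q(y* - x) + v = 0. Then f(x) - φ(y*) ≥ σ‖g* + Q(y* - x)‖·‖y* - x‖, where σ = ε² and ε > 0 is any constant such that the Euclidean ball of radius ε is contained in the ‖·‖-unit ball. -/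
open Metric

/-
Since `g*` is a subgradient of `φ` on `C ∋ x` and `g* = -(Q(y* - x) + v)` with `Q ⪰ 0`,
`f x - φ y* = φ x - φ y* ≥ ⟪v, y* - x⟫`. The trust region `{N(· - x) ≤ R}` contains the Euclidean
ball of radius `εR` around `x`, so the normal-cone condition gives `⟪v, y* - x⟫ ≥ εR‖v‖`.
Finally `‖v‖ ≥ ε N(v)`, `R ≥ N(y* - x)` and `N(g* + Q(y* - x)) = N(-v) = N(v)`.
-/

section

variable {E : Type*}

theorem Seminorm.mul_le_norm_of_le_one_of_norm_le [NormedAddCommGroup E] [NormedSpace ℝ E]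
    (p : Seminorm ℝ E) {ε : ℝ} (hε : 0 < ε) (hp : ∀ u, ‖u‖ ≤ ε → p u ≤ 1) (u : E) :
    ε * p u ≤ ‖u‖ := by
  rcases eq_or_ne u 0 with rfl | hu
  · simp
  have hu_pos : 0 < ‖u‖ := norm_pos_iff.mpr hu
  have hscaled := hp ((ε / ‖u‖) • u) (by
    rw [norm_smul, Real.norm_of_nonneg (by positivity), div_mul_cancel₀ _ hu_pos.ne'])
  rwa [map_smul_eq_mul, Real.norm_of_nonneg (by positivity), div_mul_eq_mul_div,
    div_le_one hu_pos] at hscaled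

variable [NormedAddCommGroup E] [InnerProductSpace ℝ E]

theorem mul_norm_le_inner_of_forall_mem_closedBall {x y v : E} {r : ℝ} (hr : 0 ≤ r)
    (h : ∀ u ∈ closedBall x r, 0 ≤ (inner ℝ v (y - u) : ℝ)) :
    r * ‖v‖ ≤ (inner ℝ v (y - x) : ℝ) := by
  rcases eq_or_ne v 0 with rfl | hv
  · simp
  have hv_pos : 0 < ‖v‖ := norm_pos_iff.mpr hv
  -- `u` is the point of the ball maximizing `⟪v, u⟫`
  have hu := h (x + (r / ‖v‖) • v) (by
    rw [mem_closedBall, dist_eq_norm, add_sub_cancel_left, norm_smul,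
      Real.norm_of_nonneg (by positivity), div_mul_cancel₀ _ hv_pos.ne'])
  rw [sub_add_eq_sub_sub, inner_sub_right, real_inner_smul_right, real_inner_self_eq_norm_sq,
    div_mul_eq_mul_div, sq, mul_div_assoc, mul_div_cancel_right₀ _ hv_pos.ne'] at hu
  linarith

theorem inner_le_sub_of_subgradient {φ : E → ℝ} {x y g w v : E}
    (hg : φ y + (inner ℝ g (x - y) : ℝ) ≤ φ x) (hw : 0 ≤ (inner ℝ w (y - x) : ℝ))
    (hsum : g + w + v = 0) :
    (inner ℝ v (y - x) : ℝ) ≤ φ x - φ y := by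
  have hg_eq : g = -(w + v) := by rw [add_assoc] at hsum; exact eq_neg_of_add_eq_zero_left hsum
  rw [hg_eq, ← neg_sub, inner_neg_neg, inner_add_left] at hg
  linarith

end

theorem stmt11_general {n : ℕ}
    -- the trust-region norm `N`
    (N : EuclideanSpace ℝ (Fin n) → ℝ)
    (hN_smul : ∀ (a : ℝ) (x : EuclideanSpace ℝ (Fin n)), N (a • x) = |a| * N x)
    (hN_add : ∀ x y : EuclideanSpace ℝ (Fin n), N (x + y) ≤ N x + N y)
    (ε : ℝ) (hε : 0 < ε)
    (hball : ∀ u : EuclideanSpace ℝ (Fin n), ‖u‖ ≤ ε → N u ≤ 1)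
    -- data
    (C : Set (EuclideanSpace ℝ (Fin n)))
    (x : EuclideanSpace ℝ (Fin n)) (hx : x ∈ C)
    (f φ : EuclideanSpace ℝ (Fin n) → ℝ)
    (hφx : φ x = f x)
    (Q : EuclideanSpace ℝ (Fin n) →ₗ[ℝ] EuclideanSpace ℝ (Fin n))
    (hQpsd : ∀ y, 0 ≤ (inner ℝ (Q y) y : ℝ))
    (R : ℝ)
    (ystar : EuclideanSpace ℝ (Fin n)) (hystarB : N (ystar - x) ≤ R)
    (gstar v : EuclideanSpace ℝ (Fin n))
    -- `g* ∈ ∂(φ + i_C)(y*)`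
    (hgstar : ∀ y ∈ C, φ ystar + (inner ℝ gstar (y - ystar) : ℝ) ≤ φ y)
    -- `v` in the normal cone to `B(x,R)` at `y*`
    (hv : ∀ u : EuclideanSpace ℝ (Fin n), N (u - x) ≤ R → 0 ≤ (inner ℝ v (ystar - u) : ℝ))
    (hopt : gstar + Q (ystar - x) + v = 0) :
    f x - φ ystar ≥ ε^2 * N (gstar + Q (ystar - x)) * N (ystar - x) := by
  let p : Seminorm ℝ (EuclideanSpace ℝ (Fin n)) := .of N hN_add (by simpa using hN_smul)
  have hp : ∀ u, ε * p u ≤ ‖u‖ := p.mul_le_norm_of_le_one_of_norm_le hε hball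
  have hR : 0 ≤ R := (apply_nonneg p _).trans hystarB
  have hvd : ε * R * ‖v‖ ≤ (inner ℝ v (ystar - x) : ℝ) :=
    mul_norm_le_inner_of_forall_mem_closedBall (by positivity) fun u hu ↦ hv u <|
      le_of_mul_le_mul_left ((hp _).trans (by rwa [← dist_eq_norm])) hε
  have hdescent := inner_le_sub_of_subgradient (hgstar x hx) (hQpsd _) hopt
  have hNv : N (gstar + Q (ystar - x)) = p v := by
    rw [eq_neg_of_add_eq_zero_left hopt]; exact map_neg_eq_map p v
  calc ε ^ 2 * N (gstar + Q (ystar - x)) * N (ystar - x)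
      = ε * (ε * p v) * N (ystar - x) := by rw [hNv]; ring
    _ ≤ ε * ‖v‖ * R := by gcongr; exacts [apply_nonneg p _, hp v]
    _ ≤ f x - φ ystar := by linarith

theorem stmt11 {n : ℕ}
    -- the trust-region norm `N`
    (N : EuclideanSpace ℝ (Fin n) → ℝ)
    (hN_smul : ∀ (a : ℝ) (x : EuclideanSpace ℝ (Fin n)), N (a • x) = |a| * N x)
    (hN_add : ∀ x y : EuclideanSpace ℝ (Fin n), N (x + y) ≤ N x + N y)
    (hN_def : ∀ x : EuclideanSpace ℝ (Fin n), N x = 0 ↔ x = 0)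
    (ε : ℝ) (hε : 0 < ε)
    (hball : ∀ u : EuclideanSpace ℝ (Fin n), ‖u‖ ≤ ε → N u ≤ 1)
    -- data
    (C : Set (EuclideanSpace ℝ (Fin n))) (hC : Convex ℝ C) (hCcl : IsClosed C)
    (x : EuclideanSpace ℝ (Fin n)) (hx : x ∈ C)
    (f φ : EuclideanSpace ℝ (Fin n) → ℝ) (hφconv : ConvexOn ℝ Set.univ φ)
    (hφx : φ x = f x)
    (Q : EuclideanSpace ℝ (Fin n) →ₗ[ℝ] EuclideanSpace ℝ (Fin n))
    (hQsym : ∀ y z, (inner ℝ (Q y) z : ℝ) = (inner ℝ y (Q z) : ℝ))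
    (hQpsd : ∀ y, 0 ≤ (inner ℝ (Q y) y : ℝ))
    (R : ℝ) (hR : 0 < R)
    (ystar : EuclideanSpace ℝ (Fin n)) (hystarC : ystar ∈ C) (hystarB : N (ystar - x) ≤ R)
    (hmin : ∀ y ∈ C, N (y - x) ≤ R →
      φ ystar + (1/2) * (inner ℝ (Q (ystar - x)) (ystar - x) : ℝ) ≤
        φ y + (1/2) * (inner ℝ (Q (y - x)) (y - x) : ℝ))
    (gstar v : EuclideanSpace ℝ (Fin n))
    -- `g* ∈ ∂(φ + i_C)(y*)`
    (hgstar : ∀ y ∈ C, φ ystar + (inner ℝ gstar (y - ystar) : ℝ) ≤ φ y)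
    -- `v` in the normal cone to `B(x,R)` at `y*`
    (hv : ∀ u : EuclideanSpace ℝ (Fin n), N (u - x) ≤ R → 0 ≤ (inner ℝ v (ystar - u) : ℝ))
    (hopt : gstar + Q (ystar - x) + v = 0) :
    f x - φ ystar ≥ ε^2 * N (gstar + Q (ystar - x)) * N (ystar - x) :=
  stmt11_general N hN_smul hN_add ε hε hball C x hx f φ hφx Q hQpsd R ystar hystarB gstar v hgstar
    hv hopt
end

section
/- Consider the inner-loop recursion of the bundle trust-region method with Q ≻ 0 and fixed radius R: at step k, yᵏ minimizes Φₖ(y) = φₖ(y) + ½|y - x|_Q² over C ∩ B(x,R), the aggregate plane m*ₖ(y) = φₖ(yᵏ) + gₖ*ᵀ(y - yᵏ) (with gₖ* the aggregate subgradient, satisfying gₖ* + Q(yᵏ - x) = -vₖ, vₖ in the normal cone to B(x,R) at yᵏ) satisfies m*ₖ ≤ φₖ₊₁, and all φₖ ≤ φ with φ(x) = f(x), φₖ₊₁(x) = f(x). Then the sequence Φₖ(yᵏ) is nondecreasing and bounded above by f(x); in particular Φₖ(yᵏ) ≤ Φₖ₊₁(yᵏ⁺¹) ≤ f(x) for all k,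 and consequently |yᵏ⁺¹ - yᵏ|_Q → 0. -/
/-!
Write `Φₖ(y) = φₖ(y) + ½|y - x|_Q²`. Expanding the square around `yᵏ` and using the optimality
condition `gₖ* + Q(yᵏ - x) = -vₖ` together with `vₖᵀ(yᵏ - yᵏ⁺¹) ≥ 0` and `m*ₖ ≤ φₖ₊₁` gives
`Φₖ(yᵏ) + ½|yᵏ⁺¹ - yᵏ|_Q² ≤ Φₖ₊₁(yᵏ⁺¹)`. Since `x` is feasible, `Φₖ(yᵏ) ≤ Φₖ(x) = f(x)`,
so the values increase to a finite limit and the increments `½|yᵏ⁺¹ - yᵏ|_Q²` tend to zero.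
-/

open Filter Topology Metric

theorem tendsto_zero_of_add_mul_le_succ {a b : ℕ → ℝ} {c : ℝ} (hc : 0 < c)
    (hb : ∀ k, 0 ≤ b k) (hab : ∀ k, a k + c * b k ≤ a (k + 1)) (ha : BddAbove (Set.range a)) :
    Tendsto b atTop (𝓝 0) := by
  have ha_mono : Monotone a :=
    monotone_nat_of_le_succ fun k => by nlinarith [hb k, hab k]
  have hlim := tendsto_atTop_ciSup ha_mono ha
  have hincr : Tendsto (fun k => (a (k + 1) - a k) / c) atTop (𝓝 0) := by
    simpa using ((hlim.comp (tendsto_add_atTop_nat 1)).sub hlim).div_const c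
  refine squeeze_zero hb (fun k => ?_) hincr
  rw [le_div_iff₀ hc]
  linarith [hab k]

section ProxModel

variable {E : Type*} [NormedAddCommGroup E] [InnerProductSpace ℝ E]

noncomputable def proxModel (Q : E →ₗ[ℝ] E) (x : E) (φ : E → ℝ) (u : E) : ℝ :=
  φ u + (1 / 2) * inner ℝ (Q (u - x)) (u - x)

theorem proxModel_self (Q : E →ₗ[ℝ] E) (x : E) (φ : E → ℝ) : proxModel Q x φ x = φ x := by
  simp [proxModel]

theorem LinearMap.IsSymmetric.inner_map_add_add {Q : E →ₗ[ℝ] E} (hQ : Q.IsSymmetric) (d w : E) :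
    inner ℝ (Q (d + w)) (d + w)
      = inner ℝ (Q d) d + 2 * inner ℝ (Q d) w + inner ℝ (Q w) w := by
  have hcross : inner ℝ (Q w) d = inner ℝ (Q d) w := by rw [hQ w d, real_inner_comm]
  simp only [map_add, inner_add_left, inner_add_right, hcross]
  ring

theorem proxModel_add_half_inner_le {Q : E →ₗ[ℝ] E} (hQ : Q.IsSymmetric) {x y y' g v : E}
    {φ φ' : E → ℝ} (hopt : g + Q (y - x) = -v) (hv : 0 ≤ inner ℝ v (y - y'))
    (hagg : φ y + inner ℝ g (y' - y) ≤ φ' y') :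
    proxModel Q x φ y + (1 / 2) * inner ℝ (Q (y' - y)) (y' - y) ≤ proxModel Q x φ' y' := by
  have hsplit : y' - x = (y - x) + (y' - y) := by abel
  have hcross : inner ℝ g (y' - y) + inner ℝ (Q (y - x)) (y' - y) = inner ℝ v (y - y') := by
    rw [← inner_add_left, hopt, inner_neg_left, ← inner_neg_right, neg_sub]
  simp only [proxModel]
  rw [hsplit, hQ.inner_map_add_add]
  linarith

end ProxModel

theorem stmt15_general {n : ℕ}
    -- the trust-region norm `N`
    (N : EuclideanSpace ℝ (Fin n) → ℝ)
    (hN_def : ∀ x : EuclideanSpace ℝ (Fin n), N x = 0 ↔ x = 0)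
    -- data
    (C : Set (EuclideanSpace ℝ (Fin n)))
    (x : EuclideanSpace ℝ (Fin n)) (hx : x ∈ C) (R : ℝ) (hR : 0 < R)
    (f : EuclideanSpace ℝ (Fin n) → ℝ)
    -- `Q ≻ 0` symmetric
    (Q : EuclideanSpace ℝ (Fin n) →ₗ[ℝ] EuclideanSpace ℝ (Fin n))
    (hQsym : ∀ y z, (inner ℝ (Q y) z : ℝ) = (inner ℝ y (Q z) : ℝ))
    (hQpd : ∀ u : EuclideanSpace ℝ (Fin n), u ≠ 0 → 0 < (inner ℝ (Q u) u : ℝ))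
    -- convex working models and envelope model
    (φ : ℕ → EuclideanSpace ℝ (Fin n) → ℝ)
    (hφx : ∀ k, φ k x = f x)
    -- second-order working models
    (Φ : ℕ → EuclideanSpace ℝ (Fin n) → ℝ)
    (hΦ : ∀ k u, Φ k u = φ k u + (1/2) * (inner ℝ (Q (u - x)) (u - x) : ℝ))
    -- the iterates `yᵏ` minimize `Φₖ` over `C ∩ B(x,R)`
    (y : ℕ → EuclideanSpace ℝ (Fin n))
    (hyB : ∀ k, N (y k - x) ≤ R)
    (hymin : ∀ k, ∀ u ∈ C, N (u - x) ≤ R → Φ k (y k) ≤ Φ k u)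
    -- aggregate subgradients and optimality
    (gstar v : ℕ → EuclideanSpace ℝ (Fin n))
    (hopt : ∀ k, gstar k + Q (y k - x) = -(v k))
    (hv : ∀ k, ∀ u : EuclideanSpace ℝ (Fin n), N (u - x) ≤ R →
      0 ≤ (inner ℝ (v k) (y k - u) : ℝ))
    -- the aggregate plane is dominated by the next working model
    (hagg : ∀ k u, φ k (y k) + (inner ℝ (gstar k) (u - y k) : ℝ) ≤ φ (k+1) u) :
    Monotone (fun k => Φ k (y k)) ∧
    (∀ k, Φ k (y k) ≤ f x) ∧
    Filter.Tendsto
      (fun k => Real.sqrt (inner ℝ (Q (y (k+1) - y k)) (y (k+1) - y k) : ℝ))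
      Filter.atTop (𝓝 0) := by
  have hΦ_eq : ∀ k, Φ k = proxModel Q x (φ k) := fun k => funext (hΦ k)
  have hQ_nonneg : ∀ u, 0 ≤ (inner ℝ (Q u) u : ℝ) := fun u => by
    rcases eq_or_ne u 0 with rfl | hu
    · simp
    · exact (hQpd u hu).le
  have hdescent : ∀ k, Φ k (y k) + (1 / 2) * inner ℝ (Q (y (k+1) - y k)) (y (k+1) - y k)
      ≤ Φ (k+1) (y (k+1)) := fun k => by
    rw [hΦ_eq, hΦ_eq]
    exact proxModel_add_half_inner_le hQsym (hopt k) (hv k _ (hyB (k+1))) (hagg k _)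
  have hbound : ∀ k, Φ k (y k) ≤ f x := fun k => by
    have hxB : N (x - x) ≤ R := by rw [sub_self, (hN_def 0).mpr rfl]; exact hR.le
    simpa [hΦ_eq, proxModel_self, hφx] using hymin k x hx hxB
  refine ⟨monotone_nat_of_le_succ fun k => ?_, hbound, ?_⟩
  · linarith [hdescent k, hQ_nonneg (y (k+1) - y k)]
  · have hbdd : BddAbove (Set.range fun k => Φ k (y k)) := ⟨f x, Set.forall_mem_range.2 hbound⟩
    simpa using (tendsto_zero_of_add_mul_le_succ one_half_pos (fun k => hQ_nonneg _)
      hdescent hbdd).sqrt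

theorem stmt15 {n : ℕ}
    -- the trust-region norm `N`
    (N : EuclideanSpace ℝ (Fin n) → ℝ)
    (hN_smul : ∀ (a : ℝ) (x : EuclideanSpace ℝ (Fin n)), N (a • x) = |a| * N x)
    (hN_add : ∀ x y : EuclideanSpace ℝ (Fin n), N (x + y) ≤ N x + N y)
    (hN_def : ∀ x : EuclideanSpace ℝ (Fin n), N x = 0 ↔ x = 0)
    -- data
    (C : Set (EuclideanSpace ℝ (Fin n))) (hC : Convex ℝ C) (hCcl : IsClosed C)
    (x : EuclideanSpace ℝ (Fin n)) (hx : x ∈ C) (R : ℝ) (hR : 0 < R)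
    (f : EuclideanSpace ℝ (Fin n) → ℝ)
    -- `Q ≻ 0` symmetric
    (Q : EuclideanSpace ℝ (Fin n) →ₗ[ℝ] EuclideanSpace ℝ (Fin n))
    (hQsym : ∀ y z, (inner ℝ (Q y) z : ℝ) = (inner ℝ y (Q z) : ℝ))
    (hQpd : ∀ u : EuclideanSpace ℝ (Fin n), u ≠ 0 → 0 < (inner ℝ (Q u) u : ℝ))
    -- convex working models and envelope model
    (φ : ℕ → EuclideanSpace ℝ (Fin n) → ℝ) (φenv : EuclideanSpace ℝ (Fin n) → ℝ)
    (hφconv : ∀ k, ConvexOn ℝ Set.univ (φ k))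
    (hφle : ∀ k u, φ k u ≤ φenv u)
    (hφenvx : φenv x = f x) (hφx : ∀ k, φ k x = f x)
    -- second-order working models
    (Φ : ℕ → EuclideanSpace ℝ (Fin n) → ℝ)
    (hΦ : ∀ k u, Φ k u = φ k u + (1/2) * (inner ℝ (Q (u - x)) (u - x) : ℝ))
    -- the iterates `yᵏ` minimize `Φₖ` over `C ∩ B(x,R)`
    (y : ℕ → EuclideanSpace ℝ (Fin n))
    (hyC : ∀ k, y k ∈ C) (hyB : ∀ k, N (y k - x) ≤ R)
    (hymin : ∀ k, ∀ u ∈ C, N (u - x) ≤ R → Φ k (y k) ≤ Φ k u)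
    -- aggregate subgradients and optimality
    (gstar v : ℕ → EuclideanSpace ℝ (Fin n))
    (hgstar : ∀ k, ∀ u ∈ C, φ k (y k) + (inner ℝ (gstar k) (u - y k) : ℝ) ≤ φ k u)
    (hopt : ∀ k, gstar k + Q (y k - x) = -(v k))
    (hv : ∀ k, ∀ u : EuclideanSpace ℝ (Fin n), N (u - x) ≤ R →
      0 ≤ (inner ℝ (v k) (y k - u) : ℝ))
    -- the aggregate plane is dominated by the next working model
    (hagg : ∀ k u, φ k (y k) + (inner ℝ (gstar k) (u - y k) : ℝ) ≤ φ (k+1) u) :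
    Monotone (fun k => Φ k (y k)) ∧
    (∀ k, Φ k (y k) ≤ f x) ∧
    Filter.Tendsto
      (fun k => Real.sqrt (inner ℝ (Q (y (k+1) - y k)) (y (k+1) - y k) : ℝ))
      Filter.atTop (𝓝 0) :=
  stmt15_general N hN_def C x hx R hR f Q hQsym hQpd φ hφx Φ hΦ y hyB hymin gstar v hopt hv hagg
end

section
/- Define f : [0,1] → ℝ piecewise linearly with slopes ±1 via the recursion t₁ = 1, t₂ₖ₊₁ = t₂ₖ - t₂ₖ², t₂ₖ = (√(1 + 4t₂ₖ₋₁) - 1)/2, with f(t₂ₖ) = t₂ₖ², f(t₂ₖ₊₁) = 0, slope -1 on [t₂ₖ, t₂ₖ₋₁] and slope +1 on [t₂ₖ₊₁, t₂ₖ], extended by f(0) = 0. Then f is differentiable at 0 with f'(0) = 0, but the Clarke subdifferential satisfies ∂f(0) = [-1, 1]; in particular f is not strictly differentiable at 0. -/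
open Filter Topology Set

/-- Clarke generalized directional derivative for a function on `ℝ`. -/
noncomputable def clarkeD1 (f : ℝ → ℝ) (x d : ℝ) : ℝ :=
  Filter.limsup (fun p : ℝ × ℝ => (f (p.1 + p.2 * d) - f p.1) / p.2)
    ((𝓝 x) ×ˢ (𝓝[>] (0 : ℝ)))

/-- Clarke subdifferential for a function on `ℝ`. -/
def clarkeSubdiff1 (f : ℝ → ℝ) (x : ℝ) : Set ℝ :=
  {g | ∀ d, g * d ≤ clarkeD1 f x d}

/-! With `x = t₂ₖ` the recursion gives `[t₂ₖ₊₁, t₂ₖ₋₁] = [x - x², x + x²]`, on which `f` is the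
tent `x² - |s - x|`; hence `|f s| ≤ 8 s²` near `0` and `f'(0) = 0`. On the other hand the rising
sides `[t₂ₖ₊₁, t₂ₖ]` have slope `1` and shrink to `0`, and so do their mirror images of slope `-1`.
Difference quotients taken along them reach `|d|`, the Lipschitz bound for the Clarke derivative,
so `f°(0; d) = |d|` and `∂f(0) = [-1, 1]`; the same pairs of points rule out strict
differentiability. -/

section Clarke

variable {f : ℝ → ℝ} {K : NNReal}

theorem LipschitzWith.abs_diffQuotient_le (hf : LipschitzWith K f) (x d : ℝ) {h : ℝ}
    (hh : 0 < h) : |(f (x + h * d) - f x) / h| ≤ K * |d| := by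
  rw [abs_div, abs_of_pos hh, div_le_iff₀ hh]
  have := hf.dist_le_mul (x + h * d) x
  rw [Real.dist_eq, Real.dist_eq, add_sub_cancel_left, abs_mul, abs_of_pos hh] at this
  linarith

theorem LipschitzWith.eventually_abs_diffQuotient_le (hf : LipschitzWith K f) (x d : ℝ) :
    ∀ᶠ p : ℝ × ℝ in 𝓝 x ×ˢ 𝓝[>] 0, |(f (p.1 + p.2 * d) - f p.1) / p.2| ≤ K * |d| :=
  (eventually_mem_nhdsWithin.prod_inr _).mono fun p hp => hf.abs_diffQuotient_le p.1 d hp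

theorem LipschitzWith.clarkeD1_le (hf : LipschitzWith K f) (x d : ℝ) :
    clarkeD1 f x d ≤ K * |d| := by
  have h := hf.eventually_abs_diffQuotient_le x d
  exact limsup_le_of_le
    (isBoundedUnder_of_eventually_ge (h.mono fun _ hp => (abs_le.1 hp).1)).isCoboundedUnder_le
    (h.mono fun _ hp => (abs_le.1 hp).2)

theorem LipschitzWith.le_clarkeD1_of_slope {ι : Type*} {l : Filter ι} [l.NeBot]
    (hf : LipschitzWith K f) {x d c : ℝ} {u v : ι → ℝ} (hu : Tendsto u l (𝓝 x))
    (hv : Tendsto v l (𝓝 x)) (hpos : ∀ᶠ n in l, 0 < (u n - v n) / d)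
    (hslope : ∀ᶠ n in l, f (u n) - f (v n) = c * (u n - v n)) :
    c * d ≤ clarkeD1 f x d := by
  have hd : d ≠ 0 := by
    obtain ⟨n, hn⟩ := hpos.exists
    rintro rfl
    simp at hn
  have hstep : Tendsto (fun n => (u n - v n) / d) l (𝓝[>] 0) := by
    refine tendsto_nhdsWithin_iff.2 ⟨?_, hpos⟩
    simpa using (hu.sub hv).div_const d
  have hbdd := isBoundedUnder_of_eventually_le
    ((hf.eventually_abs_diffQuotient_le x d).mono fun _ hp => (abs_le.1 hp).2)
  refine le_limsup_of_frequently_le ((hv.prodMk hstep).frequently (Eventually.frequently ?_)) hbdd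
  filter_upwards [hpos, hslope] with n hn hsl
  have hne : u n - v n ≠ 0 := by rintro h; simp [h] at hn
  rw [show v n + (u n - v n) / d * d = u n by field_simp; ring, hsl, mul_div_assoc,
    div_div_cancel₀ hne]

theorem clarkeD1_zero_right (x : ℝ) : clarkeD1 f x 0 = 0 := by
  simp [clarkeD1]

theorem clarkeSubdiff1_eq_Icc {x K : ℝ} (hD : ∀ d, clarkeD1 f x d = K * |d|) :
    clarkeSubdiff1 f x = Icc (-K) K := by
  ext g
  simp only [clarkeSubdiff1, mem_ofPred_eq, mem_Icc, hD]
  refine ⟨fun h => ⟨?_, ?_⟩, fun hg d => ?_⟩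
  · linarith [show -g ≤ K by simpa using h (-1)]
  · simpa using h 1
  · calc g * d ≤ |g| * |d| := (le_abs_self _).trans (abs_mul g d).le
      _ ≤ K * |d| := by gcongr; exact abs_le.2 hg

theorem LipschitzWith.clarkeD1_eq_abs {ι : Type*} {l : Filter ι} [l.NeBot]
    (hf : LipschitzWith 1 f) (heven : ∀ s, f (-s) = f s) {u v : ι → ℝ}
    (hu : Tendsto u l (𝓝 0)) (hv : Tendsto v l (𝓝 0)) (hgap : ∀ᶠ n in l, v n < u n)
    (hslope : ∀ᶠ n in l, f (u n) - f (v n) = 1 * (u n - v n)) (d : ℝ) :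
    clarkeD1 f 0 d = 1 * |d| := by
  refine le_antisymm (by simpa using hf.clarkeD1_le 0 d) ?_
  rcases lt_trichotomy d 0 with hd | rfl | hd
  · have := hf.le_clarkeD1_of_slope (c := -1) (by simpa using hu.neg) (by simpa using hv.neg)
      (hgap.mono fun n hn => div_pos_of_neg_of_neg (by linarith) hd)
      (hslope.mono fun n hn => by rw [heven, heven]; linarith)
    rwa [abs_of_neg hd, one_mul, ← neg_one_mul]
  · simp [clarkeD1_zero_right]
  · simpa [abs_of_pos hd] using
      hf.le_clarkeD1_of_slope hu hv (hgap.mono fun n hn => div_pos (sub_pos.2 hn) hd) hslope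

end Clarke

theorem not_hasStrictDerivAt_of_slope {ι : Type*} {l : Filter ι} [l.NeBot] {f : ℝ → ℝ}
    {f' x c : ℝ} {u v : ι → ℝ} (hu : Tendsto u l (𝓝 x)) (hv : Tendsto v l (𝓝 x))
    (hne : ∀ᶠ n in l, u n ≠ v n) (hslope : ∀ᶠ n in l, f (u n) - f (v n) = c * (u n - v n))
    (hc : c ≠ f') : ¬ HasStrictDerivAt f f' x := by
  intro h
  have hlo := ((hasDerivAtFilter_iff_isLittleO.1 h).comp_tendsto (hu.prodMk_nhds hv)).def
    (half_pos (abs_sub_pos.2 hc))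
  obtain ⟨n, hn, huv, hsl⟩ := (hlo.and (hne.and hslope)).exists
  have huv : 0 < |u n - v n| := abs_pos.2 (sub_ne_zero.2 huv)
  simp only [Function.comp_apply, hsl, smul_eq_mul, Real.norm_eq_abs] at hn
  rw [show c * (u n - v n) - (u n - v n) * f' = (c - f') * (u n - v n) by ring, abs_mul] at hn
  nlinarith [abs_pos.2 (sub_ne_zero.2 hc)]

theorem hasDerivAt_zero_of_abs_sub_le_sq {f : ℝ → ℝ} {x C : ℝ}
    (h : ∀ᶠ y in 𝓝 x, |f y - f x| ≤ C * (y - x) ^ 2) : HasDerivAt f 0 x := by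
  refine hasDerivAt_iff_isLittleO.2 ?_
  simp only [smul_zero, sub_zero]
  refine Asymptotics.IsBigO.trans_isLittleO ?_ (Asymptotics.isLittleO_pow_sub_sub x one_lt_two)
  refine Asymptotics.IsBigO.of_bound C (h.mono fun y hy => ?_)
  simpa [Real.norm_eq_abs] using hy

theorem add_sq_eq_of_eq_sqrt {u x : ℝ} (hu : 0 ≤ 1 + 4 * u)
    (hx : x = (√(1 + 4 * u) - 1) / 2) : x + x ^ 2 = u := by
  have h := Real.sq_sqrt hu
  rw [show √(1 + 4 * u) = 2 * x + 1 by linarith] at h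
  linear_combination h / 4

/-- `x < 5 / 8` keeps the foot `x - x ^ 2` of the tent above `3 x / 8`, and `8 ≥ (8 / 3) ^ 2`. -/
theorem abs_sq_sub_abs_sub_le {x s : ℝ} (hx0 : 0 ≤ x) (hx : x < 5 / 8) (hs : |s - x| ≤ x ^ 2) :
    |(x ^ 2 - |s - x|)| ≤ 8 * s ^ 2 := by
  rw [abs_of_nonneg (sub_nonneg.2 hs)]
  have hfoot : 3 / 8 * x ≤ s := by nlinarith [neg_abs_le (s - x)]
  nlinarith [abs_nonneg (s - x), mul_le_mul hfoot hfoot (by positivity) (by linarith)]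

theorem exists_mem_Icc_of_tendsto_zero {t : ℕ → ℝ} (ht : Tendsto t atTop (𝓝 0)) {s : ℝ}
    (hs : 0 < s) {m : ℕ} (hsm : s ≤ t m) : ∃ n ≥ m, s ∈ Icc (t (n + 1)) (t n) := by
  classical
  have hex : ∃ n, t (m + n + 1) < s := by
    obtain ⟨N, hN⟩ := eventually_atTop.1 (ht.eventually_lt_const hs)
    exact ⟨N, hN _ (by omega)⟩
  refine ⟨m + Nat.find hex, by omega, (Nat.find_spec hex).le, ?_⟩
  rcases Nat.eq_zero_or_pos (Nat.find hex) with h | h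
  · simpa [h] using hsm
  · have := Nat.find_min hex (Nat.sub_lt h one_pos)
    rwa [show m + (Nat.find hex - 1) + 1 = m + Nat.find hex by omega, not_lt] at this

section ZigZag

variable {f : ℝ → ℝ} {t : ℕ → ℝ}

theorem apply_two_mul_sub_one_eq
    (hteven : ∀ k, 1 ≤ k → t (2*k) = (Real.sqrt (1 + 4 * t (2*k - 1)) - 1) / 2)
    (htpos : ∀ k, 1 ≤ k → 0 < t k) {k : ℕ} (hk : 1 ≤ k) :
    t (2*k - 1) = t (2*k) + t (2*k) ^ 2 :=
  (add_sq_eq_of_eq_sqrt (by linarith [htpos (2*k - 1) (by omega)]) (hteven k hk)).symm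

theorem apply_two_mul_sub_one_le_one (ht1 : t 1 = 1)
    (htodd : ∀ k, 1 ≤ k → t (2*k+1) = t (2*k) - (t (2*k))^2) {k : ℕ} (hk : 1 ≤ k) :
    t (2*k - 1) ≤ 1 := by
  obtain rfl | hk := hk.eq_or_lt
  · simp [ht1]
  · obtain ⟨j, rfl⟩ : ∃ j, k = j + 1 := ⟨k - 1, by omega⟩
    rw [show 2 * (j + 1) - 1 = 2 * j + 1 by omega, htodd j (by omega)]
    nlinarith [sq_nonneg (t (2*j) - 1 / 2)]

theorem exists_mem_Icc_two_mul_add_one_two_mul_sub_one (ht1 : t 1 = 1)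
    (ht0 : Tendsto t atTop (𝓝 0))
    (htodd : ∀ k, 1 ≤ k → t (2*k+1) = t (2*k) - (t (2*k))^2)
    (hkey : ∀ k, 1 ≤ k → t (2*k - 1) = t (2*k) + t (2*k) ^ 2) {s : ℝ} (hs : 0 < s)
    (hs1 : s ≤ 1) : ∃ k ≥ 1, s ∈ Icc (t (2*k+1)) (t (2*k - 1)) := by
  obtain ⟨n, hn, hsn⟩ := exists_mem_Icc_of_tendsto_zero ht0 hs (m := 1) (by rwa [ht1])
  obtain ⟨k, rfl | rfl⟩ := Nat.even_or_odd' n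
  · refine ⟨k, by omega, hsn.1, hsn.2.trans ?_⟩
    rw [hkey k (by omega)]
    exact le_add_of_nonneg_right (sq_nonneg _)
  · refine ⟨k + 1, by omega, ?_, ?_⟩
    · rw [htodd (k + 1) (by omega), show 2 * (k + 1) = 2 * k + 1 + 1 by omega]
      linarith [hsn.1, sq_nonneg (t (2 * k + 1 + 1))]
    · simpa [show 2 * (k + 1) - 1 = 2 * k + 1 by omega] using hsn.2

theorem eq_sq_sub_abs_of_mem_Icc
    (htodd : ∀ k, 1 ≤ k → t (2*k+1) = t (2*k) - (t (2*k))^2)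
    (hslopeNeg : ∀ k, 1 ≤ k → ∀ s ∈ Set.Icc (t (2*k)) (t (2*k-1)),
      f s = (t (2*k))^2 - (s - t (2*k)))
    (hslopePos : ∀ k, 1 ≤ k → ∀ s ∈ Set.Icc (t (2*k+1)) (t (2*k)),
      f s = s - t (2*k+1))
    {k : ℕ} (hk : 1 ≤ k) {s : ℝ} (hs : s ∈ Icc (t (2*k+1)) (t (2*k - 1))) :
    f s = t (2*k) ^ 2 - |s - t (2*k)| := by
  rcases le_total s (t (2*k)) with h | h
  · rw [hslopePos k hk s ⟨hs.1, h⟩, abs_of_nonpos (sub_nonpos.2 h), htodd k hk]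
    ring
  · rw [hslopeNeg k hk s ⟨h, hs.2⟩, abs_of_nonneg (sub_nonneg.2 h)]

theorem abs_le_eight_mul_sq (ht1 : t 1 = 1)
    (htodd : ∀ k, 1 ≤ k → t (2*k+1) = t (2*k) - (t (2*k))^2)
    (htpos : ∀ k, 1 ≤ k → 0 < t k)
    (ht0 : Tendsto t atTop (𝓝 0))
    (hkey : ∀ k, 1 ≤ k → t (2*k - 1) = t (2*k) + t (2*k) ^ 2)
    (hf0 : f 0 = 0)
    (hslopeNeg : ∀ k, 1 ≤ k → ∀ s ∈ Set.Icc (t (2*k)) (t (2*k-1)),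
      f s = (t (2*k))^2 - (s - t (2*k)))
    (hslopePos : ∀ k, 1 ≤ k → ∀ s ∈ Set.Icc (t (2*k+1)) (t (2*k)),
      f s = s - t (2*k+1))
    (hsymm : ∀ s : ℝ, f (-s) = f s) {s : ℝ} (hs : |s| ≤ 1) :
    |f s| ≤ 8 * s ^ 2 := by
  wlog hs0 : 0 < s generalizing s
  · rcases (not_lt.1 hs0).eq_or_lt with rfl | hneg
    · simp [hf0]
    · simpa [hsymm] using this (s := -s) (by simpa using hs) (by linarith)
  obtain ⟨k, hk, hsk⟩ :=
    exists_mem_Icc_two_mul_add_one_two_mul_sub_one ht1 ht0 htodd hkey hs0 (le_of_abs_le hs)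
  have hx0 := htpos (2*k) (by omega)
  have hxk := hkey k hk
  have hx1 := apply_two_mul_sub_one_le_one ht1 htodd hk
  rw [eq_sq_sub_abs_of_mem_Icc htodd hslopeNeg hslopePos hk hsk]
  refine abs_sq_sub_abs_sub_le hx0.le (by nlinarith) (abs_le.2 ⟨?_, ?_⟩)
  · linarith [hsk.1, htodd k hk]
  · linarith [hsk.2]

end ZigZag

theorem stmt16_general (f : ℝ → ℝ) (t : ℕ → ℝ)
    (hLip : LipschitzWith 1 f)
    (ht1 : t 1 = 1)
    (hteven : ∀ k, 1 ≤ k → t (2*k) = (Real.sqrt (1 + 4 * t (2*k - 1)) - 1) / 2)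
    (htodd : ∀ k, 1 ≤ k → t (2*k+1) = t (2*k) - (t (2*k))^2)
    (htpos : ∀ k, 1 ≤ k → 0 < t k)
    (ht0 : Filter.Tendsto t Filter.atTop (𝓝 0))
    (hf0 : f 0 = 0)
    (hfeven : ∀ k, 1 ≤ k → f (t (2*k)) = (t (2*k))^2)
    (hfodd : ∀ k, 1 ≤ k → f (t (2*k+1)) = 0)
    -- slope `-1` on `[t₂ₖ, t₂ₖ₋₁]`
    (hslopeNeg : ∀ k, 1 ≤ k → ∀ s ∈ Set.Icc (t (2*k)) (t (2*k-1)),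
      f s = (t (2*k))^2 - (s - t (2*k)))
    -- slope `+1` on `[t₂ₖ₊₁, t₂ₖ]`
    (hslopePos : ∀ k, 1 ≤ k → ∀ s ∈ Set.Icc (t (2*k+1)) (t (2*k)),
      f s = s - t (2*k+1))
    -- symmetric extension to the left of `0`
    (hsymm : ∀ s : ℝ, f (-s) = f s) :
    HasDerivAt f 0 0 ∧
    clarkeSubdiff1 f 0 = Set.Icc (-1 : ℝ) 1 ∧
    ¬ HasStrictDerivAt f 0 0 := by
  have hkey k (hk : 1 ≤ k) := apply_two_mul_sub_one_eq hteven htpos hk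
  have hu : Tendsto (fun k => t (2*k)) atTop (𝓝 0) :=
    ht0.comp (tendsto_atTop_mono (fun k => show k ≤ _ by omega) tendsto_id)
  have hv : Tendsto (fun k => t (2*k+1)) atTop (𝓝 0) :=
    ht0.comp (tendsto_atTop_mono (fun k => show k ≤ _ by omega) tendsto_id)
  have hgap : ∀ᶠ k in atTop, t (2*k+1) < t (2*k) :=
    (eventually_ge_atTop 1).mono fun k hk => by
      rw [htodd k hk]
      linarith [pow_pos (htpos (2*k) (by omega)) 2]
  have hslope : ∀ᶠ k in atTop, f (t (2*k)) - f (t (2*k+1)) = 1 * (t (2*k) - t (2*k+1)) :=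
    (eventually_ge_atTop 1).mono fun k hk => by rw [hfeven k hk, hfodd k hk, htodd k hk]; ring
  have hD := hLip.clarkeD1_eq_abs hsymm hu hv hgap hslope
  refine ⟨hasDerivAt_zero_of_abs_sub_le_sq (C := 8) ?_, by simpa using clarkeSubdiff1_eq_Icc hD,
    not_hasStrictDerivAt_of_slope hu hv (hgap.mono fun k hk => hk.ne') hslope one_ne_zero⟩
  filter_upwards [Metric.closedBall_mem_nhds (0 : ℝ) one_pos] with s hs
  simpa [hf0] using abs_le_eight_mul_sq ht1 htodd htpos ht0 hkey hf0 hslopeNeg hslopePos hsymm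
    (by simpa using hs)

theorem stmt16 (f : ℝ → ℝ) (t : ℕ → ℝ)
    (hLip : LipschitzWith 1 f)
    (ht1 : t 1 = 1)
    (hteven : ∀ k, 1 ≤ k → t (2*k) = (Real.sqrt (1 + 4 * t (2*k - 1)) - 1) / 2)
    (htodd : ∀ k, 1 ≤ k → t (2*k+1) = t (2*k) - (t (2*k))^2)
    (htpos : ∀ k, 1 ≤ k → 0 < t k)
    (htdec : ∀ k, 1 ≤ k → t (k+1) < t k)
    (ht0 : Filter.Tendsto t Filter.atTop (𝓝 0))
    (hf0 : f 0 = 0)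
    (hfeven : ∀ k, 1 ≤ k → f (t (2*k)) = (t (2*k))^2)
    (hfodd : ∀ k, 1 ≤ k → f (t (2*k+1)) = 0)
    -- slope `-1` on `[t₂ₖ, t₂ₖ₋₁]`
    (hslopeNeg : ∀ k, 1 ≤ k → ∀ s ∈ Set.Icc (t (2*k)) (t (2*k-1)),
      f s = (t (2*k))^2 - (s - t (2*k)))
    -- slope `+1` on `[t₂ₖ₊₁, t₂ₖ]`
    (hslopePos : ∀ k, 1 ≤ k → ∀ s ∈ Set.Icc (t (2*k+1)) (t (2*k)),
      f s = s - t (2*k+1))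
    -- symmetric extension to the left of `0`
    (hsymm : ∀ s : ℝ, f (-s) = f s) :
    HasDerivAt f 0 0 ∧
    clarkeSubdiff1 f 0 = Set.Icc (-1 : ℝ) 1 ∧
    ¬ HasStrictDerivAt f 0 0 :=
  stmt16_general f t hLip ht1 hteven htodd htpos ht0 hf0 hfeven hfodd hslopeNeg hslopePos hsymm
end

section
/- Let 𝒪 be a cutting plane oracle for a locally Lipschitz f : ℝⁿ → ℝ satisfying axioms (𝒪₁)–(𝒪₄) and bounded on bounded sets, with constant M > 0. Then the envelope function φ(y,x) = sup{a + gᵀ(y - x) : (a,g) ∈ 𝒪(z,x), ‖z - x‖ ≤ M} is finite-valued, convex in y, satisfies φ(x,x) = f(x), and every convex subgradient of φ(·,x) at x belongs to the Clarke subdifferential ∂f(x). -/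
/-!
Pool the planes that the oracle delivers at the base point `x` from points `z` with
`‖z - x‖ ≤ M` into one set `P`, bounded by assumption. Then `φ(·, x)` is the pointwise supremum
of the affine functions `a + ⟪g, · - x⟫`, `(a, g) ∈ P`: it is finite and convex, and by (𝒪₁)
it equals `f x` at `x`. If `g` is a subgradient of `φ(·, x)` at `x` and `d` is a direction, then
`φ(x + t • d) ≥ f x + t ⟪g, d⟫`, so some plane `(aₜ, gₜ) ∈ P` has
`aₜ + t ⟪gₜ, d⟫ > f x + t ⟪g, d⟫ - t²`. Since `aₜ ≤ f x`, this forces `⟪g, d⟫ < ⟪gₜ, d⟫ + t`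
and `aₜ → f x` as `t → 0`. A cluster point `g'` of the `gₜ` lies in `∂f(x)` by (𝒪₂), and
`⟪g, d⟫ ≤ ⟪g', d⟫ ≤ f°(x; d)`.
-/

open Filter Topology Metric Bornology

/-- The set of values at `y` of the planes delivered by the oracle near `x`. -/
def planeValues {n : ℕ} (O : EuclideanSpace ℝ (Fin n) → EuclideanSpace ℝ (Fin n) →
    Set (ℝ × EuclideanSpace ℝ (Fin n))) (M : ℝ)
    (y x : EuclideanSpace ℝ (Fin n)) : Set ℝ :=
  {v | ∃ z a g, ‖z - x‖ ≤ M ∧ (a, g) ∈ O z x ∧ v = a + (inner ℝ g (y - x) : ℝ)}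

open scoped RealInnerProductSpace

theorem convexOn_ciSup {V ι : Type*} [AddCommGroup V] [Module ℝ V] [Nonempty ι] {s : Set V}
    {F : ι → V → ℝ} (hs : Convex ℝ s) (hF : ∀ i, ConvexOn ℝ s (F i))
    (hbdd : ∀ y ∈ s, BddAbove (Set.range fun i => F i y)) :
    ConvexOn ℝ s fun y => ⨆ i, F i y := by
  refine ⟨hs, fun y hy y' hy' a b ha hb hab => ciSup_le fun i => ?_⟩
  calc F i (a • y + b • y') ≤ a • F i y + b • F i y' := (hF i).2 hy hy' ha hb hab
    _ ≤ a • (⨆ j, F j y) + b • (⨆ j, F j y') := by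
      simp only [smul_eq_mul]
      gcongr
      exacts [le_ciSup (hbdd y hy) i, le_ciSup (hbdd y' hy') i]

section Envelope

variable {E : Type*} [NormedAddCommGroup E] [InnerProductSpace ℝ E]

noncomputable def envelope (P : Set (ℝ × E)) (x y : E) : ℝ :=
  sSup ((fun p : ℝ × E => p.1 + ⟪p.2, y - x⟫) '' P)

theorem bddAbove_image_plane {P : Set (ℝ × E)} (hP : IsBounded P) (v : E) :
    BddAbove ((fun p : ℝ × E => p.1 + ⟪p.2, v⟫) '' P) := by
  let L : ℝ × E →L[ℝ] ℝ := ContinuousLinearMap.fst ℝ ℝ E + (innerSL ℝ v).comp (.snd ℝ ℝ E)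
  have hL : (fun p : ℝ × E => p.1 + ⟪p.2, v⟫) = L := by
    ext p
    simp [L, real_inner_comm]
  rw [hL]
  exact (L.lipschitz.isBounded_image hP).bddAbove

theorem convexOn_envelope {P : Set (ℝ × E)} (hne : P.Nonempty) (hP : IsBounded P) (x : E) :
    ConvexOn ℝ Set.univ (envelope P x) := by
  have : Nonempty P := hne.to_subtype
  have hplane : ∀ p : ℝ × E, ConvexOn ℝ Set.univ fun y => p.1 + ⟪p.2, y - x⟫ := by
    refine fun p => ⟨convex_univ, fun y _ y' _ a b _ _ hab => le_of_eq ?_⟩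
    simp only [smul_eq_mul, inner_sub_right, inner_add_right, real_inner_smul_right]
    linear_combination (⟪p.2, x⟫ - p.1) * hab
  have henv : envelope P x = fun y => ⨆ p : P, (p : ℝ × E).1 + ⟪(p : ℝ × E).2, y - x⟫ := by
    ext y
    exact sSup_image'
  rw [henv]
  refine convexOn_ciSup convex_univ (fun p => hplane p) fun y _ => ?_
  simpa only [Set.image_eq_range] using bddAbove_image_plane hP (y - x)

theorem envelope_self {P : Set (ℝ × E)} {c : ℝ} {g₀ : E} (hmem : (c, g₀) ∈ P)
    (hle : ∀ p ∈ P, p.1 ≤ c) (x : E) : envelope P x x = c := by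
  refine IsGreatest.csSup_eq ⟨⟨(c, g₀), hmem, by simp⟩, ?_⟩
  rintro _ ⟨p, hp, rfl⟩
  simpa using hle p hp

variable {P : Set (ℝ × E)} {x g : E}

theorem exists_near_plane_of_envelope_subgradient (hne : P.Nonempty) (hle : ∀ p ∈ P, p.1 ≤ envelope P x x)
    (hg : ∀ y, envelope P x x + ⟪g, y - x⟫ ≤ envelope P x y) (d : E) {t : ℝ} (ht : 0 < t) :
    ∃ p ∈ P, ⟪g, d⟫ < ⟪p.2, d⟫ + t ∧ envelope P x x - t * (⟪p.2, d⟫ + t - ⟪g, d⟫) < p.1 := by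
  obtain ⟨_, ⟨p, hp, rfl⟩, hlt⟩ := exists_lt_of_lt_csSup (hne.image _)
    (sub_lt_self (envelope P x (x + t • d)) (mul_pos ht ht))
  have hsub := hg (x + t • d)
  simp only [add_sub_cancel_left, real_inner_smul_right] at hsub hlt
  have hpos : 0 < t * (⟪p.2, d⟫ + t - ⟪g, d⟫) := by linarith [hle p hp]
  refine ⟨p, hp, ?_, by linarith⟩
  linarith [pos_of_mul_pos_right hpos ht.le]

theorem exists_tendsto_of_envelope_subgradient [ProperSpace E] (hne : P.Nonempty)
    (hP : IsBounded P) (hle : ∀ p ∈ P, p.1 ≤ envelope P x x)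
    (hg : ∀ y, envelope P x x + ⟪g, y - x⟫ ≤ envelope P x y) (d : E) :
    ∃ (p : ℕ → ℝ × E) (g' : E), (∀ j, p j ∈ P) ∧
      Tendsto p atTop (𝓝 (envelope P x x, g')) ∧ ⟪g, d⟫ ≤ ⟪g', d⟫ := by
  choose p hpP hinner hlow using
    fun j : ℕ => exists_near_plane_of_envelope_subgradient hne hle hg d (Nat.one_div_pos_of_nat (n := j))
  obtain ⟨q, -, ψ, hψ, hq⟩ := tendsto_subseq_of_bounded hP hpP
  have ht : Tendsto (fun k => 1 / ((ψ k : ℝ) + 1)) atTop (𝓝 0) :=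
    tendsto_one_div_add_atTop_nhds_zero_nat.comp hψ.tendsto_atTop
  have hinnerq : Tendsto (fun k => ⟪(p (ψ k)).2, d⟫) atTop (𝓝 ⟪q.2, d⟫) :=
    hq.snd_nhds.inner tendsto_const_nhds
  have hq₁ : q.1 = envelope P x x := by
    refine le_antisymm (le_of_tendsto' hq.fst_nhds fun k => hle _ (hpP _))
      (le_of_tendsto_of_tendsto' ?_ hq.fst_nhds fun k => (hlow (ψ k)).le)
    simpa using tendsto_const_nhds.sub (ht.mul ((hinnerq.add ht).sub tendsto_const_nhds))
  refine ⟨p ∘ ψ, q.2, fun k => hpP _, by rwa [← hq₁], ?_⟩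
  exact ge_of_tendsto' (by simpa using hinnerq.add ht) fun k => (hinner (ψ k)).le

end Envelope

section Oracle

variable {n : ℕ} {O : EuclideanSpace ℝ (Fin n) → EuclideanSpace ℝ (Fin n) →
  Set (ℝ × EuclideanSpace ℝ (Fin n))} {M : ℝ}

def localPlanes (O : EuclideanSpace ℝ (Fin n) → EuclideanSpace ℝ (Fin n) →
    Set (ℝ × EuclideanSpace ℝ (Fin n))) (M : ℝ) (x : EuclideanSpace ℝ (Fin n)) :
    Set (ℝ × EuclideanSpace ℝ (Fin n)) :=
  ⋃ z ∈ closedBall x M, O z x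

theorem mem_localPlanes {x : EuclideanSpace ℝ (Fin n)} {p : ℝ × EuclideanSpace ℝ (Fin n)} :
    p ∈ localPlanes O M x ↔ ∃ z, ‖z - x‖ ≤ M ∧ p ∈ O z x := by
  simp [localPlanes, dist_eq_norm]

theorem planeValues_eq_image (y x : EuclideanSpace ℝ (Fin n)) :
    planeValues O M y x = (fun p : ℝ × _ => p.1 + ⟪p.2, y - x⟫) '' localPlanes O M x := by
  ext v
  simp only [planeValues, Set.mem_image, mem_localPlanes, Prod.exists]
  grind

theorem sSup_planeValues (y x : EuclideanSpace ℝ (Fin n)) :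
    sSup (planeValues O M y x) = envelope (localPlanes O M x) x y := by
  rw [planeValues_eq_image]
  rfl

end Oracle

theorem stmt18_general {n : ℕ} (f : EuclideanSpace ℝ (Fin n) → ℝ)
    (O : EuclideanSpace ℝ (Fin n) → EuclideanSpace ℝ (Fin n) →
      Set (ℝ × EuclideanSpace ℝ (Fin n)))
    (M : ℝ) (hM : 0 < M)
    -- bounded on bounded sets
    (hbdd : ∀ s : Set (EuclideanSpace ℝ (Fin n) × EuclideanSpace ℝ (Fin n)),
      IsBounded s → IsBounded (⋃ p ∈ s, O p.1 p.2))
    -- (𝒪₁)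
    (hO1a : ∀ z x a g, (a, g) ∈ O z x → a ≤ f x)
    (hO1b : ∀ x, ∃ g ∈ clarkeSubdiff f x, (f x, g) ∈ O x x)
    -- (𝒪₂)
    (hO2 : ∀ (x : EuclideanSpace ℝ (Fin n)) (z : ℕ → EuclideanSpace ℝ (Fin n))
      (a : ℕ → ℝ) (gs : ℕ → EuclideanSpace ℝ (Fin n)) (g : EuclideanSpace ℝ (Fin n)),
      (∀ j, (a j, gs j) ∈ O (z j) x) → Filter.Tendsto a Filter.atTop (𝓝 (f x)) →
      (∀ j, ‖z j - x‖ ≤ M) → Filter.Tendsto gs Filter.atTop (𝓝 g) →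
      g ∈ clarkeSubdiff f x) :
    -- the envelope is finite-valued, convex, exact at `x`, with subgradients in `∂f(x)`
    (∀ x y, (planeValues O M y x).Nonempty ∧ BddAbove (planeValues O M y x)) ∧
    (∀ x, ConvexOn ℝ Set.univ (fun y => sSup (planeValues O M y x))) ∧
    (∀ x, sSup (planeValues O M x x) = f x) ∧
    (∀ x, convexSubdiff (fun y => sSup (planeValues O M y x)) x ⊆ clarkeSubdiff f x) := by
  have hP : ∀ x, IsBounded (localPlanes O M x) := fun x =>
    (hbdd _ (isBounded_closedBall.prod isBounded_singleton)).subset fun p hp => by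
      obtain ⟨z, hz, hp⟩ := mem_localPlanes.mp hp
      exact Set.mem_biUnion (x := (z, x)) ⟨mem_closedBall_iff_norm.mpr hz, rfl⟩ hp
  have hle : ∀ x, ∀ p ∈ localPlanes O M x, p.1 ≤ f x := fun x p hp => by
    obtain ⟨z, -, hp⟩ := mem_localPlanes.mp hp
    exact hO1a z x p.1 p.2 hp
  have hself : ∀ x, ∃ g, (f x, g) ∈ localPlanes O M x := fun x => by
    obtain ⟨g, -, hg⟩ := hO1b x
    exact ⟨g, mem_localPlanes.mpr ⟨x, by simpa using hM.le, hg⟩⟩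
  have hexact : ∀ x, envelope (localPlanes O M x) x x = f x := fun x =>
    envelope_self (hself x).choose_spec (hle x) x
  have hne : ∀ x, (localPlanes O M x).Nonempty := fun x => ⟨_, (hself x).choose_spec⟩
  simp only [sSup_planeValues]
  simp only [planeValues_eq_image]
  refine ⟨fun x y => ⟨(hne x).image _, bddAbove_image_plane (hP x) _⟩,
    fun x => convexOn_envelope (hne x) (hP x) x, hexact, fun x g hg d => ?_⟩
  obtain ⟨p, g', hpP, hp, hgd⟩ :=
    exists_tendsto_of_envelope_subgradient (hne x) (hP x) (by rw [hexact]; exact hle x) hg d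
  choose z hz hpO using fun j => mem_localPlanes.mp (hpP j)
  rw [hexact] at hp
  exact hgd.trans (hO2 x z _ _ g' hpO hp.fst_nhds hz hp.snd_nhds d)

theorem stmt18 {n : ℕ} (f : EuclideanSpace ℝ (Fin n) → ℝ) (hf : LocallyLipschitz f)
    (O : EuclideanSpace ℝ (Fin n) → EuclideanSpace ℝ (Fin n) →
      Set (ℝ × EuclideanSpace ℝ (Fin n)))
    (M : ℝ) (hM : 0 < M)
    (hne : ∀ z x, (O z x).Nonempty)
    -- bounded on bounded sets
    (hbdd : ∀ s : Set (EuclideanSpace ℝ (Fin n) × EuclideanSpace ℝ (Fin n)),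
      IsBounded s → IsBounded (⋃ p ∈ s, O p.1 p.2))
    -- (𝒪₁)
    (hO1a : ∀ z x a g, (a, g) ∈ O z x → a ≤ f x)
    (hO1b : ∀ x, ∃ g ∈ clarkeSubdiff f x, (f x, g) ∈ O x x)
    -- (𝒪₂)
    (hO2 : ∀ (x : EuclideanSpace ℝ (Fin n)) (z : ℕ → EuclideanSpace ℝ (Fin n))
      (a : ℕ → ℝ) (gs : ℕ → EuclideanSpace ℝ (Fin n)) (g : EuclideanSpace ℝ (Fin n)),
      (∀ j, (a j, gs j) ∈ O (z j) x) → Filter.Tendsto a Filter.atTop (𝓝 (f x)) →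
      (∀ j, ‖z j - x‖ ≤ M) → Filter.Tendsto gs Filter.atTop (𝓝 g) →
      g ∈ clarkeSubdiff f x)
    -- (𝒪₃)
    (hO3 : ∀ (x : EuclideanSpace ℝ (Fin n)) (z : ℕ → EuclideanSpace ℝ (Fin n)),
      Filter.Tendsto z Filter.atTop (𝓝 x) →
      ∃ (a : ℕ → ℝ) (g : ℕ → EuclideanSpace ℝ (Fin n)) (ε : ℕ → ℝ),
        (∀ j, (a j, g j) ∈ O (z j) x) ∧ (∀ j, 0 ≤ ε j) ∧
        Filter.Tendsto ε Filter.atTop (𝓝 0) ∧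
        ∀ j, f (z j) ≤ a j + (inner ℝ (g j) (z j - x) : ℝ) + ε j * ‖z j - x‖)
    -- (𝒪₄)
    (hO4 : ∀ (z y x : ℕ → EuclideanSpace ℝ (Fin n))
      (zl yl xl : EuclideanSpace ℝ (Fin n)),
      Filter.Tendsto z Filter.atTop (𝓝 zl) → Filter.Tendsto y Filter.atTop (𝓝 yl) →
      Filter.Tendsto x Filter.atTop (𝓝 xl) →
      ∀ (a : ℕ → ℝ) (g : ℕ → EuclideanSpace ℝ (Fin n)),
        (∀ j, (a j, g j) ∈ O (z j) (x j)) →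
        ∃ z' : EuclideanSpace ℝ (Fin n), ‖z' - xl‖ ≤ M ∧
          ∃ a' g', (a', g') ∈ O z' xl ∧
            Filter.limsup (fun j => a j + (inner ℝ (g j) (y j - x j) : ℝ)) Filter.atTop
              ≤ a' + (inner ℝ g' (yl - xl) : ℝ)) :
    -- the envelope is finite-valued, convex, exact at `x`, with subgradients in `∂f(x)`
    (∀ x y, (planeValues O M y x).Nonempty ∧ BddAbove (planeValues O M y x)) ∧
    (∀ x, ConvexOn ℝ Set.univ (fun y => sSup (planeValues O M y x))) ∧
    (∀ x, sSup (planeValues O M x x) = f x) ∧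
    (∀ x, convexSubdiff (fun y => sSup (planeValues O M y x)) x ⊆ clarkeSubdiff f x) :=
  stmt18_general f O M hM hbdd hO1a hO1b hO2
end
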